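/- arXiv:2205.07519 — 14 statements merged into one kernel-verified Lean document; each statement's English description precedes it below -/
import Mathlib

section
/- For two agents with additive valuations over a finite set M of goods, the maximin share is feasible: for any two additive valuations v1, v2 on M, there exists a partition of M into bundles A1, A2 such that v1(A1) ≥ MMS_2(v1) and v2(A2) ≥ MMS_2(v2), where MMS_2(v) = max over partitions (B1,B2) of M of min(v(B1), v(B2)). -/
/-- The maximin share for 2 agents of an additive valuation given by item values `w`:
the supremum of values `x` such that some partition `(B, Bᶜ)` gives both bundles value
at least `x`. -/
noncomputable def MMS2 {M : Type*} [Fintype M] [DecidableEq M] (w : M → ℝ) : ℝ :=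
  sSup {x : ℝ | ∃ B : Finset M, x ≤ ∑ e ∈ B, w e ∧ x ≤ ∑ e ∈ Bᶜ, w e}

/-! Cut and choose: agent 1 cuts `M` along a partition attaining `MMS2 w₁`, and agent 2
picks the bundle it values more. That bundle is worth at least half of `w₂(M)`, and no
partition can give both of its bundles more than half, so it is worth at least `MMS2 w₂`. -/

open Finset

section MMS2

variable {M : Type*} [Fintype M] [DecidableEq M] (w : M → ℝ)

theorem MMS2_eq_sup' :
    MMS2 w = univ.sup' univ_nonempty fun B : Finset M ↦ min (∑ e ∈ B, w e) (∑ e ∈ Bᶜ, w e) := by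
  have hset : {x : ℝ | ∃ B : Finset M, x ≤ ∑ e ∈ B, w e ∧ x ≤ ∑ e ∈ Bᶜ, w e} =
      Set.Iic (univ.sup' univ_nonempty fun B : Finset M ↦
        min (∑ e ∈ B, w e) (∑ e ∈ Bᶜ, w e)) := by
    ext x
    simp [Finset.le_sup'_iff]
  rw [MMS2, hset, csSup_Iic]

theorem exists_MMS2_le_sum :
    ∃ B : Finset M, MMS2 w ≤ ∑ e ∈ B, w e ∧ MMS2 w ≤ ∑ e ∈ Bᶜ, w e := by
  obtain ⟨B, -, hB⟩ := exists_mem_eq_sup' (univ_nonempty (α := Finset M))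
    fun B ↦ min (∑ e ∈ B, w e) (∑ e ∈ Bᶜ, w e)
  exact ⟨B, le_min_iff.mp (MMS2_eq_sup' w ▸ hB.le)⟩

theorem two_mul_MMS2_le_sum : 2 * MMS2 w ≤ ∑ e, w e := by
  suffices MMS2 w ≤ (∑ e, w e) / 2 by linarith
  rw [MMS2_eq_sup', sup'_le_iff]
  intro B _
  have := sum_add_sum_compl B w
  linarith [min_le_left (∑ e ∈ B, w e) (∑ e ∈ Bᶜ, w e),
    min_le_right (∑ e ∈ B, w e) (∑ e ∈ Bᶜ, w e)]

theorem MMS2_le_sum_or_le_sum_compl (B : Finset M) :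
    MMS2 w ≤ ∑ e ∈ B, w e ∨ MMS2 w ≤ ∑ e ∈ Bᶜ, w e := by
  have := sum_add_sum_compl B w
  have := two_mul_MMS2_le_sum w
  by_contra! h
  linarith [h.1, h.2]

end MMS2

theorem mms_feasible_two_agents_general {M : Type*} [Fintype M] [DecidableEq M]
    (w₁ w₂ : M → ℝ) :
    ∃ A : Finset M, MMS2 w₁ ≤ ∑ e ∈ A, w₁ e ∧ MMS2 w₂ ≤ ∑ e ∈ Aᶜ, w₂ e := by
  obtain ⟨B, hB, hBc⟩ := exists_MMS2_le_sum w₁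
  rcases MMS2_le_sum_or_le_sum_compl w₂ B with h₂B | h₂Bc
  · exact ⟨Bᶜ, hBc, by rwa [compl_compl]⟩
  · exact ⟨B, hB, h₂Bc⟩

/-- For two agents with additive valuations over goods, the MMS is feasible. -/
theorem mms_feasible_two_agents {M : Type*} [Fintype M] [DecidableEq M]
    (w₁ w₂ : M → ℝ) (h₁ : ∀ e, 0 ≤ w₁ e) (h₂ : ∀ e, 0 ≤ w₂ e) :
    ∃ A : Finset M, MMS2 w₁ ≤ ∑ e ∈ A, w₁ e ∧ MMS2 w₂ ≤ ∑ e ∈ Aᶜ, w₂ e :=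
  mms_feasible_two_agents_general w₁ w₂
end

section
/- The maximin share is self-maximizing: for any valuations v, v' over a finite set M and any number n of agents, the minimum of v over bundles S with v(S) ≥ MMS_n(v) is at least the minimum of v over bundles S with v'(S) ≥ MMS_n(v'). That is, truthful reporting maximizes the implied guarantee with respect to the true valuation v. -/
/-!
Let `P` be a partition attaining `MMS n v'`. Every bundle of `P` is acceptable under the report
`v'`, so the implied guarantee `g` of `v'` is at most `v (P j)` for every `j`; thus `P` itself
witnesses `g ≤ MMS n v`. Truthful reporting, on the other hand, guarantees at least `MMS n v`.
-/

/-- The maximin share of a valuation `v` for `n` agents: the supremum of values `x`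
such that there is a partition of the items into `n` bundles each of `v`-value at least `x`. -/
noncomputable def MMS {M : Type*} [Fintype M] [DecidableEq M] (n : ℕ) (v : Finset M → ℝ) : ℝ :=
  sSup {x : ℝ | ∃ P : Fin n → Finset M,
    (∀ i j, i ≠ j → Disjoint (P i) (P j)) ∧
    Finset.univ.biUnion P = Finset.univ ∧
    ∀ j, x ≤ v (P j)}

open Finset

/-- `MMS n v` unfolds to `sSup (guaranteedValues n v)`; the lemmas below use this definitionally. -/
def guaranteedValues {M : Type*} [Fintype M] [DecidableEq M] (n : ℕ) (v : Finset M → ℝ) :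
    Set ℝ :=
  {x : ℝ | ∃ P : Fin n → Finset M,
    (∀ i j, i ≠ j → Disjoint (P i) (P j)) ∧
    univ.biUnion P = univ ∧
    ∀ j, x ≤ v (P j)}

section

variable {M : Type*} [Fintype M] [DecidableEq M] {n : ℕ} (v : Finset M → ℝ)

theorem guaranteedValues_nonempty (hn : 1 ≤ n) : (guaranteedValues n v).Nonempty := by
  let j₀ : Fin n := ⟨0, hn⟩
  refine ⟨min (v univ) (v ∅), fun j => if j = j₀ then univ else ∅, ?_, ?_, ?_⟩
  · intro i j hij
    by_cases hi : i = j₀ <;> by_cases hj : j = j₀ <;> simp_all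
  · exact eq_univ_of_forall fun a => mem_biUnion.mpr ⟨j₀, mem_univ _, by simp⟩
  · intro j
    dsimp only
    split_ifs
    exacts [min_le_left _ _, min_le_right _ _]

theorem guaranteedValues_bddAbove (hn : 1 ≤ n) : BddAbove (guaranteedValues n v) := by
  obtain ⟨b, hb⟩ := (Set.finite_range v).bddAbove
  exact ⟨b, fun x ⟨P, _, _, hx⟩ => (hx ⟨0, hn⟩).trans (hb ⟨_, rfl⟩)⟩

theorem isClosed_guaranteedValues : IsClosed (guaranteedValues n v) := by
  have h : guaranteedValues n v = ⋃ P ∈ {P : Fin n → Finset M |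
      (∀ i j, i ≠ j → Disjoint (P i) (P j)) ∧ univ.biUnion P = univ},
      ⋂ j, Set.Iic (v (P j)) := by
    ext x
    simp [guaranteedValues, and_assoc]
  rw [h]
  exact (Set.toFinite _).isClosed_biUnion fun P _ => isClosed_iInter fun j => isClosed_Iic

theorem MMS_mem_guaranteedValues (hn : 1 ≤ n) : MMS n v ∈ guaranteedValues n v :=
  (isClosed_guaranteedValues v).csSup_mem (guaranteedValues_nonempty v hn)
    (guaranteedValues_bddAbove v hn)

theorem MMS_le_sInf_image (hn : 1 ≤ n) : MMS n v ≤ sInf (v '' {S | MMS n v ≤ v S}) := by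
  obtain ⟨Q, -, -, hQ⟩ := MMS_mem_guaranteedValues v hn
  refine le_csInf ⟨_, Q ⟨0, hn⟩, hQ _, rfl⟩ ?_
  rintro _ ⟨S, hS, rfl⟩
  exact hS

theorem sInf_image_le_MMS (hn : 1 ≤ n) (v' : Finset M → ℝ) :
    sInf (v '' {S | MMS n v' ≤ v' S}) ≤ MMS n v := by
  obtain ⟨P, hdisj, hcover, hP⟩ := MMS_mem_guaranteedValues v' hn
  have hbundle : ∀ j, sInf (v '' {S | MMS n v' ≤ v' S}) ≤ v (P j) :=
    fun j => csInf_le (Set.toFinite _).bddBelow ⟨P j, hP j, rfl⟩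
  exact le_csSup (guaranteedValues_bddAbove v hn) ⟨P, hdisj, hcover, hbundle⟩

end

theorem mms_self_maximizing_general {M : Type*} [Fintype M] [DecidableEq M] (n : ℕ) (hn : 1 ≤ n)
    (v v' : Finset M → ℝ) :
    sInf (v '' {S : Finset M | MMS n v' ≤ v' S})
      ≤ sInf (v '' {S : Finset M | MMS n v ≤ v S}) :=
  (sInf_image_le_MMS v hn v').trans (MMS_le_sInf_image v hn)

/-- The MMS is self-maximizing: the implied guarantee
`min { v S : v' S ≥ MMS n v' }` is maximized by the truthful report `v' = v`. -/
theorem mms_self_maximizing {M : Type*} [Fintype M] [DecidableEq M] (n : ℕ) (hn : 1 ≤ n)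
    (v v' : Finset M → ℝ)
    (hv0 : v ∅ = 0) (hv'0 : v' ∅ = 0)
    (hvmono : ∀ S T : Finset M, S ⊆ T → v S ≤ v T)
    (hv'mono : ∀ S T : Finset M, S ⊆ T → v' S ≤ v' T) :
    sInf (v '' {S : Finset M | MMS n v' ≤ v' S})
      ≤ sInf (v '' {S : Finset M | MMS n v ≤ v S}) :=
  mms_self_maximizing_general n hn v v'
end

section
/- For n ≥ 3 agents, the proportional share over additive valuations is not self-maximizing: there exist a set M of items and additive valuations v, v' on M such that min{ v(S) : v'(S) ≥ v'(M)/n } > min{ v(S) : v(S) ≥ v(M)/n }. Concretely, with m = n+2 items where v(e_j) = (n-1)/n for j ≤ n and v(e_{n+1}) = v(e_{n+2}) = 1/2, and v'(e_j) = (2n-1)/(2n) for j ≤ n and v'(e_{n+1}) = v'(e_{n+2}) = 1/4, the implied guarantee with report v' strictly exceeds the proportional share guarantee of v. -/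
/-!
Both valuations total `n`, so each threshold `v(M)/n` is `1`. Under `v` the two small items
alone reach it, so the proportional share guarantee is at most `1`. Under `v'` a big item is worth
less than `1` and a small one `1/4`, so a set reaching the threshold needs two big items, or one big
and one small item; either way its true value is at least `2/3 + 1/2 = 7/6`.
-/

open Finset

section Guarantee

variable {α : Type*} {v : α → ℝ} {P : Set (Finset α)}

lemma sInf_image_sum_le (hv : ∀ e, 0 ≤ v e) {S : Finset α} (hS : S ∈ P) :
    sInf ((fun S : Finset α => ∑ e ∈ S, v e) '' P) ≤ ∑ e ∈ S, v e :=
  csInf_le ⟨0, by rintro _ ⟨T, -, rfl⟩; exact sum_nonneg fun e _ => hv e⟩ ⟨S, hS, rfl⟩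

lemma le_sInf_image_sum {c : ℝ} (hP : P.Nonempty) (h : ∀ S ∈ P, c ≤ ∑ e ∈ S, v e) :
    c ≤ sInf ((fun S : Finset α => ∑ e ∈ S, v e) '' P) :=
  le_csInf (hP.image _) (by rintro _ ⟨S, hS, rfl⟩; exact h S hS)

end Guarantee

section TwoValued

variable {n : ℕ} (x y : ℝ)

lemma sum_ite_val_lt (S : Finset (Fin (n + 2))) :
    ∑ e ∈ S, (if e.val < n then x else y)
      = #(S.filter fun e => e.val < n) * x + #(S.filter fun e => ¬ e.val < n) * y := by
  simp only [sum_ite, sum_const, nsmul_eq_mul]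

lemma sum_univ_ite_val_lt :
    ∑ e : Fin (n + 2), (if e.val < n then x else y) = n * x + 2 * y := by
  simp [Fin.sum_univ_add]

lemma card_filter_not_val_lt_le_two (S : Finset (Fin (n + 2))) :
    #(S.filter fun e => ¬ e.val < n) ≤ 2 :=
  calc #(S.filter fun e => ¬ e.val < n)
      ≤ #(Ico n (n + 2)) :=
        card_le_card_of_injOn Fin.val (fun e he => by simp at he ⊢; omega)
          Fin.val_injective.injOn
    _ = 2 := by simp

end TwoValued

lemma seven_div_six_le {x x' : ℝ} (hx : 2 / 3 ≤ x) (hx' : x' < 1) {a b : ℕ} (hb : b ≤ 2)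
    (h : 1 ≤ a * x' + b * (1 / 4)) : 7 / 6 ≤ a * x + b * (1 / 2) := by
  have hb' : (b : ℝ) ≤ 2 := by exact_mod_cast hb
  have h_count : 4 < 4 * a + b := by
    rcases Nat.eq_zero_or_pos a with rfl | ha
    · simp only [CharP.cast_eq_zero, zero_mul, zero_add] at h
      linarith
    · have : (a : ℝ) * x' < a := mul_lt_of_lt_one_right (by exact_mod_cast ha) hx'
      exact_mod_cast (by linarith : (4 : ℝ) < 4 * a + b)
  have : (7 : ℝ) ≤ 4 * a + 3 * b := by exact_mod_cast (by omega : 7 ≤ 4 * a + 3 * b)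
  nlinarith [mul_le_mul_of_nonneg_left hx (Nat.cast_nonneg a)]

/-- For `n ≥ 3` agents, the proportional share over additive valuations is not
self-maximizing: for the concrete instance with `n + 2` items where the true valuation
`v` gives value `(n-1)/n` to the first `n` items and `1/2` to the last two, and the
report `v'` gives `(2n-1)/(2n)` to the first `n` items and `1/4` to the last two, the
implied guarantee with report `v'` strictly exceeds the proportional share guarantee
of `v`. -/
theorem proportional_share_not_self_maximizing (n : ℕ) (hn : 3 ≤ n) :
    let w : Fin (n + 2) → ℝ := fun i => if i.val < n then ((n : ℝ) - 1) / n else 1 / 2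
    let w' : Fin (n + 2) → ℝ :=
      fun i => if i.val < n then (2 * (n : ℝ) - 1) / (2 * n) else 1 / 4
    sInf ((fun S : Finset (Fin (n + 2)) => ∑ e ∈ S, w e) ''
        {S : Finset (Fin (n + 2)) | (∑ e, w e) / n ≤ ∑ e ∈ S, w e})
      < sInf ((fun S : Finset (Fin (n + 2)) => ∑ e ∈ S, w e) ''
        {S : Finset (Fin (n + 2)) | (∑ e, w' e) / n ≤ ∑ e ∈ S, w' e}) := by
  intro w w'
  have hn' : (3 : ℝ) ≤ n := by exact_mod_cast hn
  have hw : ∑ e, w e = n := by simp only [w, sum_univ_ite_val_lt]; field_simp; ring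
  have hw' : ∑ e, w' e = n := by simp only [w', sum_univ_ite_val_lt]; field_simp; ring
  have hx : 2 / 3 ≤ ((n : ℝ) - 1) / n := by
    rw [div_le_div_iff₀ (by norm_num) (by linarith)]; linarith
  have hx' : (2 * (n : ℝ) - 1) / (2 * n) < 1 := by rw [div_lt_one (by linarith)]; linarith
  have h_small :
      ∑ e ∈ ({⟨n, by omega⟩, ⟨n + 1, by omega⟩} : Finset (Fin (n + 2))), w e = 1 := by
    rw [sum_pair (by simp)]; norm_num [w]
  rw [hw, hw', div_self (by linarith : (n : ℝ) ≠ 0)]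
  calc _ ≤ 1 := (sInf_image_sum_le (fun e => by dsimp only [w]; split_ifs <;> positivity)
          (show (1 : ℝ) ≤ _ from h_small.ge)).trans_eq h_small
    _ < 7 / 6 := by norm_num
    _ ≤ _ := by
        have h_univ : (1 : ℝ) ≤ ∑ e ∈ univ, w' e := by rw [hw']; linarith
        refine le_sInf_image_sum ⟨univ, h_univ⟩ fun S hS => ?_
        simp only [Set.mem_ofPred_eq, w', sum_ite_val_lt] at hS
        simp only [w, sum_ite_val_lt]
        exact seven_div_six_le hx hx' (card_filter_not_val_lt_le_two S) hS
end

section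
/- For two agents, the proportional share over additive valuations is self-maximizing: for any additive valuations v, v' on a finite set M, min{ v(S) : v(S) ≥ v(M)/2 } ≥ min{ v(S) : v'(S) ≥ v'(M)/2 }. -/
/-! A set `S` that the true valuation `w` values at least half of `M` can only be rejected
under the report `w'` if its complement is accepted instead; and since `w S ≥ w M / 2`, the
complement is worth no more than `S` to the truthful agent. So every value in the truthful
set is matched by a value at most as large in the reported set. -/

open Finset

namespace Finset

variable {M : Type*} [Fintype M] [DecidableEq M]

lemma half_le_sum_or_half_le_sum_compl (f : M → ℝ) (S : Finset M) :
    (∑ e, f e) / 2 ≤ ∑ e ∈ S, f e ∨ (∑ e, f e) / 2 ≤ ∑ e ∈ Sᶜ, f e := by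
  have := sum_add_sum_compl S f
  by_contra! h
  linarith [h.1, h.2]

lemma sum_compl_le_sum_of_half_le (f : M → ℝ) {S : Finset M}
    (hS : (∑ e, f e) / 2 ≤ ∑ e ∈ S, f e) : ∑ e ∈ Sᶜ, f e ≤ ∑ e ∈ S, f e := by
  linarith [sum_add_sum_compl S f]

lemma exists_half_le_sum_and_sum_le_of_half_le (w w' : M → ℝ) {S : Finset M}
    (hS : (∑ e, w e) / 2 ≤ ∑ e ∈ S, w e) :
    ∃ T : Finset M, (∑ e, w' e) / 2 ≤ ∑ e ∈ T, w' e ∧ ∑ e ∈ T, w e ≤ ∑ e ∈ S, w e := by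
  rcases half_le_sum_or_half_le_sum_compl w' S with hS' | hSc'
  · exact ⟨S, hS', le_rfl⟩
  · exact ⟨Sᶜ, hSc', sum_compl_le_sum_of_half_le w hS⟩

end Finset

theorem proportional_share_self_maximizing_two_agents_general {M : Type*} [Fintype M]
    (w w' : M → ℝ) (hw : ∀ e, 0 ≤ w e) :
    sInf ((fun S : Finset M => ∑ e ∈ S, w e) ''
        {S : Finset M | (∑ e, w' e) / 2 ≤ ∑ e ∈ S, w' e})
      ≤ sInf ((fun S : Finset M => ∑ e ∈ S, w e) ''
        {S : Finset M | (∑ e, w e) / 2 ≤ ∑ e ∈ S, w e}) := by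
  classical
  have hbdd : BddBelow ((fun S : Finset M => ∑ e ∈ S, w e) ''
      {S : Finset M | (∑ e, w' e) / 2 ≤ ∑ e ∈ S, w' e}) :=
    ⟨0, by rintro _ ⟨S, -, rfl⟩; exact sum_nonneg fun e _ => hw e⟩
  have huniv : (∑ e, w e) / 2 ≤ ∑ e, w e := half_le_self (sum_nonneg fun e _ => hw e)
  refine le_csInf ⟨_, univ, huniv, rfl⟩ ?_
  rintro _ ⟨S, hS, rfl⟩
  obtain ⟨T, hT, hTS⟩ := exists_half_le_sum_and_sum_le_of_half_le w w' hS
  exact (csInf_le hbdd ⟨T, hT, rfl⟩).trans hTS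

/-- For two agents, the proportional share over additive valuations is self-maximizing:
for any additive valuations given by item values `w` (true) and `w'` (report),
`min { v S : v S ≥ v M / 2 } ≥ min { v S : v' S ≥ v' M / 2 }`. -/
theorem proportional_share_self_maximizing_two_agents {M : Type*} [Fintype M] [DecidableEq M]
    (w w' : M → ℝ) (hw : ∀ e, 0 ≤ w e) (hw' : ∀ e, 0 ≤ w' e) :
    sInf ((fun S : Finset M => ∑ e ∈ S, w e) ''
        {S : Finset M | (∑ e, w' e) / 2 ≤ ∑ e ∈ S, w' e})
      ≤ sInf ((fun S : Finset M => ∑ e ∈ S, w e) ''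
        {S : Finset M | (∑ e, w e) / 2 ≤ ∑ e ∈ S, w e}) :=
  proportional_share_self_maximizing_two_agents_general w w' hw
end

section
/- Suppose a share s is self-maximizing for a class C of valuations that is closed under positive scaling. Then the share guarantee of s is scale invariant: for every v ∈ C and c > 0, the share guarantee of c·v equals c times the share guarantee of v. -/
/-! Self-maximization applied to the pair `(v, c • v)` says that reporting `c • v` cannot help `v`,
and applied to `(c • v, v)` that reporting `v` cannot help `c • v`; since the implied guarantee of
`c • v` is `c` times that of `v` for the same report, these are the two inequalities. -/

theorem Real.sInf_image_const_mul {α : Type*} (f : α → ℝ) {c : ℝ} (hc : 0 ≤ c) (A : Set α) :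
    sInf ((fun a => c * f a) '' A) = c * sInf (f '' A) := by
  rw [← Set.image_image (c * ·) f A, ← smul_eq_mul, ← Real.sInf_smul_of_nonneg hc]
  rfl

theorem selfmax_implies_scale_invariant_general {M : Type*}
    (C : Set ((Finset M) → ℝ)) (s : ((Finset M) → ℝ) → ℝ)
    (hclosed : ∀ v ∈ C, ∀ c : ℝ, 0 < c → (fun S => c * v S) ∈ C)
    (hSM : ∀ v ∈ C, ∀ v' ∈ C,
      sInf (v '' {S : Finset M | s v' ≤ v' S}) ≤ sInf (v '' {S : Finset M | s v ≤ v S}))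
    (v : (Finset M) → ℝ) (hv : v ∈ C) (c : ℝ) (hc : 0 < c) :
    sInf ((fun S => c * v S) '' {S : Finset M | s (fun S => c * v S) ≤ c * v S})
      = c * sInf (v '' {S : Finset M | s v ≤ v S}) := by
  set w := fun S => c * v S
  have hw : w ∈ C := hclosed v hv c hc
  apply le_antisymm
  · calc sInf (w '' {S | s w ≤ w S})
        = c * sInf (v '' {S | s w ≤ w S}) := Real.sInf_image_const_mul v hc.le _
      _ ≤ c * sInf (v '' {S | s v ≤ v S}) :=
          mul_le_mul_of_nonneg_left (hSM v hv w hw) hc.le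
  · calc c * sInf (v '' {S | s v ≤ v S})
        = sInf (w '' {S | s v ≤ v S}) := (Real.sInf_image_const_mul v hc.le _).symm
      _ ≤ sInf (w '' {S | s w ≤ w S}) := hSM w hw v hv

/-- If a share `s` is self-maximizing for a class `C` of valuations closed under
positive scaling, then its share guarantee is scale invariant:
the share guarantee of `c • v` equals `c` times the share guarantee of `v`. -/
theorem selfmax_implies_scale_invariant {M : Type*} [Fintype M] [DecidableEq M]
    (C : Set ((Finset M) → ℝ)) (s : ((Finset M) → ℝ) → ℝ)
    (hnonneg : ∀ v ∈ C, ∀ S : Finset M, 0 ≤ v S)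
    (hreal : ∀ v ∈ C, ∃ S : Finset M, s v ≤ v S)
    (hclosed : ∀ v ∈ C, ∀ c : ℝ, 0 < c → (fun S => c * v S) ∈ C)
    (hSM : ∀ v ∈ C, ∀ v' ∈ C,
      sInf (v '' {S : Finset M | s v' ≤ v' S}) ≤ sInf (v '' {S : Finset M | s v ≤ v S}))
    (v : (Finset M) → ℝ) (hv : v ∈ C) (c : ℝ) (hc : 0 < c) :
    sInf ((fun S => c * v S) '' {S : Finset M | s (fun S => c * v S) ≤ c * v S})
      = c * sInf (v '' {S : Finset M | s v ≤ v S}) :=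
  selfmax_implies_scale_invariant_general C s hclosed hSM v hv c hc
end

section
/- Suppose a share s is self-maximizing for a class C of valuations. Then the share guarantee of s is 1-Lipschitz: for every δ > 0 and v, v' ∈ C such that |v(S) − v'(S)| ≤ δ for every S ⊆ M, the share guarantee of v' is at most the share guarantee of v plus δ. -/
/-!
Let `A'` be the bundles acceptable under the report `v'`. Some `S ∈ A'` minimizes `v` on `A'`,
so `v S` is the implied guarantee `ĝ_v(v') ≤ ĝ(v)`, and `ĝ(v') ≤ v' S ≤ v S + δ`.
-/

theorem csInf_image_le_csInf_image_add {ι : Type*} [Finite ι] {A : Set ι} (hA : A.Nonempty)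
    {f g : ι → ℝ} {δ : ℝ} (hfg : ∀ i ∈ A, f i ≤ g i + δ) :
    sInf (f '' A) ≤ sInf (g '' A) + δ := by
  obtain ⟨i, hi, hmin⟩ := Set.exists_min_image A g A.toFinite hA
  have hgi : g i ≤ sInf (g '' A) :=
    le_csInf (hA.image g) (by rintro _ ⟨j, hj, rfl⟩; exact hmin j hj)
  calc sInf (f '' A) ≤ f i := csInf_le (Set.toFinite _).bddBelow ⟨i, hi, rfl⟩
    _ ≤ g i + δ := hfg i hi
    _ ≤ sInf (g '' A) + δ := by gcongr

theorem selfmax_implies_one_lipschitz_general {M : Type*} [Fintype M]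
    (C : Set ((Finset M) → ℝ)) (s : ((Finset M) → ℝ) → ℝ)
    (hreal : ∀ v ∈ C, ∃ S : Finset M, s v ≤ v S)
    (hSM : ∀ v ∈ C, ∀ v' ∈ C,
      sInf (v '' {S : Finset M | s v' ≤ v' S}) ≤ sInf (v '' {S : Finset M | s v ≤ v S}))
    (δ : ℝ)
    (v : (Finset M) → ℝ) (hv : v ∈ C) (v' : (Finset M) → ℝ) (hv' : v' ∈ C)
    (hclose : ∀ S : Finset M, |v S - v' S| ≤ δ) :
    sInf (v' '' {S : Finset M | s v' ≤ v' S})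
      ≤ sInf (v '' {S : Finset M | s v ≤ v S}) + δ :=
  calc sInf (v' '' {S : Finset M | s v' ≤ v' S})
      ≤ sInf (v '' {S : Finset M | s v' ≤ v' S}) + δ :=
        csInf_image_le_csInf_image_add (hreal v' hv') fun S _ =>
          sub_le_iff_le_add'.mp (abs_sub_le_iff.mp (hclose S)).2
    _ ≤ sInf (v '' {S : Finset M | s v ≤ v S}) + δ := add_le_add_left (hSM v hv v' hv') δ

/-- If a share `s` is self-maximizing for a class `C` of valuations, then its share
guarantee is 1-Lipschitz: if `|v(S) − v'(S)| ≤ δ` for every bundle `S`, then the share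
guarantee of `v'` is at most the share guarantee of `v` plus `δ`. -/
theorem selfmax_implies_one_lipschitz {M : Type*} [Fintype M] [DecidableEq M]
    (C : Set ((Finset M) → ℝ)) (s : ((Finset M) → ℝ) → ℝ)
    (hnonneg : ∀ v ∈ C, ∀ S : Finset M, 0 ≤ v S)
    (hreal : ∀ v ∈ C, ∃ S : Finset M, s v ≤ v S)
    (hSM : ∀ v ∈ C, ∀ v' ∈ C,
      sInf (v '' {S : Finset M | s v' ≤ v' S}) ≤ sInf (v '' {S : Finset M | s v ≤ v S}))
    (δ : ℝ) (hδ : 0 < δ)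
    (v : (Finset M) → ℝ) (hv : v ∈ C) (v' : (Finset M) → ℝ) (hv' : v' ∈ C)
    (hclose : ∀ S : Finset M, |v S - v' S| ≤ δ) :
    sInf (v' '' {S : Finset M | s v' ≤ v' S})
      ≤ sInf (v '' {S : Finset M | s v ≤ v S}) + δ :=
  selfmax_implies_one_lipschitz_general C s hreal hSM δ v hv v' hv' hclose
end

section
/- For any additive valuation v over a finite set M and n agents, there exists a picking order ω (a sequence ω_1,...,ω_m ∈ [n]) such that the ω-picking-order share of an agent with valuation v equals MMS_n(v). Specifically, taking any MMS partition of M and the picking order in which agent k picks at the positions (in the non-increasing value ordering of items by v) corresponding to bundle k, every agent greedily picking the highest remaining item receives a bundle of value at least MMS_n(v). -/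
/-!
Fix an MMS partition, encoded by the bundle index `b e` of each item `e`, and a non-increasing
enumeration `σ₀` of the items; in the picking order, turn `j` goes to the owner `b (σ₀ j)` of the
`j`-th item. All non-increasing enumerations have the same value sequence, so under greedy picking
agent `k` collects exactly the value of bundle `k`, and the minimum over agents is the MMS.
-/

open Finset

/-- The maximin share of an additive valuation with item values `w` for `n` agents. -/
noncomputable def MMSadd {M : Type*} [Fintype M] [DecidableEq M] (n : ℕ) (w : M → ℝ) : ℝ :=
  sSup {x : ℝ | ∃ P : Fin n → Finset M,
    (∀ i j, i ≠ j → Disjoint (P i) (P j)) ∧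
    Finset.univ.biUnion P = Finset.univ ∧
    ∀ j, x ≤ ∑ e ∈ P j, w e}

theorem comp_eq_comp_of_antitone {M α : Type*} [PartialOrder α] {m : ℕ} (w : M → α)
    {σ τ : Fin m ≃ M} (hσ : Antitone (w ∘ σ)) (hτ : Antitone (w ∘ τ)) : w ∘ σ = w ∘ τ := by
  have h := Tuple.unique_monotone (α := αᵒᵈ) (f := OrderDual.toDual ∘ w ∘ σ)
    (σ := Equiv.refl _) (τ := τ.trans σ.symm) hσ.dual_right
    (fun i j hij => by simpa using hτ hij)
  funext j
  simpa using congrFun h j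

theorem exists_antitone_comp_equiv {M α : Type*} [Fintype M] [LinearOrder α] (w : M → α) :
    ∃ σ : Fin (Fintype.card M) ≃ M, Antitone (w ∘ σ) := by
  let e := (Fintype.equivFin M).symm
  exact ⟨(Tuple.sort (OrderDual.toDual ∘ w ∘ e)).trans e,
    fun _ _ hij => Tuple.monotone_sort (OrderDual.toDual ∘ w ∘ e) hij⟩

theorem exists_filter_eq_of_disjoint_of_biUnion_eq_univ {M ι : Type*} [Fintype M]
    [DecidableEq M] [Fintype ι] [DecidableEq ι] (P : ι → Finset M)
    (hdisj : ∀ i j, i ≠ j → Disjoint (P i) (P j)) (hcov : univ.biUnion P = univ) :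
    ∃ b : M → ι, ∀ k, univ.filter (b · = k) = P k := by
  have hmem : ∀ e, ∃ k, e ∈ P k := fun e => by
    simpa using (hcov ▸ mem_univ e : e ∈ univ.biUnion P)
  choose b hb using hmem
  refine ⟨b, fun k => ext fun e => ⟨?_, fun he => ?_⟩⟩
  · rintro he
    simpa [(mem_filter.mp he).2] using hb e
  · by_contra hbk
    exact disjoint_left.mp (hdisj _ _ fun h => hbk (mem_filter.mpr ⟨mem_univ e, h⟩)) (hb e) he

theorem exists_assignment_inf'_eq_mmsAdd {M : Type*} [Fintype M] [DecidableEq M] {n : ℕ}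
    (hn : 0 < n) (w : M → ℝ) :
    ∃ b : M → Fin n,
      univ.inf' ⟨⟨0, hn⟩, mem_univ _⟩ (fun k => ∑ e with b e = k, w e) = MMSadd n w := by
  have hne : (univ : Finset (Fin n)).Nonempty := ⟨⟨0, hn⟩, mem_univ _⟩
  obtain ⟨b, -, hb⟩ := exists_max_image univ
    (fun b : M → Fin n => univ.inf' hne fun k => ∑ e with b e = k, w e)
    ⟨fun _ => ⟨0, hn⟩, mem_univ _⟩
  refine ⟨b, (IsGreatest.csSup_eq ⟨?_, ?_⟩).symm⟩
  · refine ⟨fun k => {e | b e = k}, fun i j hij => ?_, ?_, fun k => inf'_le _ (mem_univ k)⟩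
    · simp only [disjoint_left, mem_filter, mem_univ, true_and]
      rintro e rfl rfl
      exact hij rfl
    · ext e
      simp
  · rintro x ⟨P, hdisj, hcov, hx⟩
    obtain ⟨c, hc⟩ := exists_filter_eq_of_disjoint_of_biUnion_eq_univ P hdisj hcov
    calc x ≤ univ.inf' hne fun k => ∑ e with c e = k, w e :=
          le_inf' hne _ fun k _ => hc k ▸ hx k
      _ ≤ _ := hb c (mem_univ c)

theorem exists_picking_order_share_eq_mms_general {M : Type*} [Fintype M] [DecidableEq M]
    (n : ℕ) (hn : 0 < n) (w : M → ℝ) :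
    ∃ ω : Fin (Fintype.card M) → Fin n,
      ∀ σ : Fin (Fintype.card M) ≃ M,
        (∀ i j : Fin (Fintype.card M), i ≤ j → w (σ j) ≤ w (σ i)) →
        Finset.univ.inf' ⟨⟨0, hn⟩, Finset.mem_univ _⟩
            (fun k : Fin n =>
              ∑ j ∈ Finset.univ.filter (fun j : Fin (Fintype.card M) => ω j = k), w (σ j))
          = MMSadd n w := by
  obtain ⟨b, hb⟩ := exists_assignment_inf'_eq_mmsAdd hn w
  obtain ⟨σ₀, hσ₀⟩ := exists_antitone_comp_equiv w
  refine ⟨b ∘ σ₀, fun σ hσ => ?_⟩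
  have hval : ∀ j, w (σ j) = w (σ₀ j) :=
    congrFun (comp_eq_comp_of_antitone w (fun i j hij => hσ i j hij) hσ₀)
  rw [← hb]
  congr 1
  funext k
  exact sum_equiv σ₀ (by simp) fun j _ => hval j

/-- For any additive valuation `w` over `M` and `n ≥ 1` agents, there exists a picking
order `ω` such that the `ω`-picking-order share of `w` equals `MMS_n(w)`: when all agents
greedily pick (i.e., at step `j` the item of the `j`-th largest value, represented by any
non-increasing enumeration `σ` of the items, is picked by agent `ω j`), the minimum over
agent identities `k` of the value agent `k` receives equals the MMS; in particular every
agent receives a bundle of value at least `MMS_n(w)`. -/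
theorem exists_picking_order_share_eq_mms {M : Type*} [Fintype M] [DecidableEq M]
    (n : ℕ) (hn : 0 < n) (w : M → ℝ) (hw : ∀ e, 0 ≤ w e) :
    ∃ ω : Fin (Fintype.card M) → Fin n,
      ∀ σ : Fin (Fintype.card M) ≃ M,
        (∀ i j : Fin (Fintype.card M), i ≤ j → w (σ j) ≤ w (σ i)) →
        Finset.univ.inf' ⟨⟨0, hn⟩, Finset.mem_univ _⟩
            (fun k : Fin n =>
              ∑ j ∈ Finset.univ.filter (fun j : Fin (Fintype.card M) => ω j = k), w (σ j))
          = MMSadd n w :=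
  exists_picking_order_share_eq_mms_general n hn w
end

section
/- Every ordinal maximin share for additive valuations is self-maximizing: fix n and a family F of partitions of index sets [m] into n parts; define the F-maximin share of an additive valuation v by sorting items in non-increasing v-value as e_1,...,e_m and taking s(v) = max_{P ∈ F} min_{j ∈ [n]} Σ_{i ∈ B_j} v(e_i) for P = (B_1,...,B_n). Then for all additive v, v': min{ v(S) : v(S) ≥ s(v) } ≥ min{ v(S) : v'(S) ≥ s(v') }. -/
/-!
The maximin share only depends on the rank positions of the items, and the best partition for
the report `w'` has a bundle `R` of rank positions whose `w'`-value (read through `σ'`) is at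
least `s(w')` and whose `w`-value (read through `σ`) is at most `s(w)`. It remains to find a
bundle `T` of items that is at least as good as `R` for `w'` and at most as good as `R` for `w`.
This is a greedy exchange: going through `R` from its last position `r` downwards, among the
`r + 1` items that are `w'`-ranked at or above `r` pick one of least `w`-value; it has `w`-rank at
least `r`, so it costs no more than the item of `w`-rank `r`.
-/

open Finset Function

section Exchange

variable {ι α : Type*} [LinearOrder α] {m : ℕ}

theorem exists_mem_apply_le_of_lt_card (c : ι → α) (e : Fin m ≃ ι) (hc : Antitone (c ∘ e))
    {D : Finset ι} {r : Fin m} (hr : (r : ℕ) < #D) : ∃ q ∈ D, c q ≤ c (e r) := by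
  by_contra! h
  have hD : D.map e.symm.toEmbedding ⊆ Iio r := by
    intro i hi
    obtain ⟨q, hq, rfl⟩ := mem_map.mp hi
    by_contra hle
    exact (h q hq).not_ge (by simpa using hc (not_lt.mp (mem_Iio.not.mp hle)))
  have := card_le_card hD
  rw [card_map, Fin.card_Iio] at this
  omega

variable [AddCommMonoid α] [IsOrderedAddMonoid α]

theorem exists_injective_mem_sum_le (c : ι → α) (e : Fin m ≃ ι) (hc : Antitone (c ∘ e)) :
    ∀ {k : ℕ} (D : Fin k → Finset ι) (b : Fin k → Fin m), Monotone D → StrictMono b →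
      (∀ t, (b t : ℕ) < #(D t)) →
      ∃ β : Fin k → ι, Injective β ∧ (∀ t, β t ∈ D t) ∧ ∑ t, c (β t) ≤ ∑ t, c (e (b t)) := by
  classical
  intro k
  induction k with
  | zero => exact fun _ _ _ _ _ => ⟨finZeroElim, fun t => t.elim0, fun t => t.elim0, by simp⟩
  | succ k ih =>
    intro D b hD hb hcard
    obtain ⟨q, hq, hqb⟩ := exists_mem_apply_le_of_lt_card c e hc (hcard (Fin.last k))
    obtain ⟨p, hp, hpmin⟩ := (D (Fin.last k)).exists_min_image c ⟨q, hq⟩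
    have hex : ∃ t, p ∈ D t := ⟨_, hp⟩
    -- `p` goes to the first index `t₀` whose set contains it: before `t₀` the sets do not lose
    -- `p`, from `t₀` on the budgets shift down by one index and so still fit.
    set t₀ := Fin.find (p ∈ D ·) hex
    have hpt₀ : p ∈ D t₀ := Fin.find_spec hex
    have hcard' : ∀ j : Fin k, (b j.castSucc : ℕ) < #((D (t₀.succAbove j)).erase p) := by
      intro j
      rcases lt_or_ge j.castSucc t₀ with hj | hj
      · rw [Fin.succAbove_of_castSucc_lt _ _ hj, erase_eq_of_notMem (Fin.find_min hex hj)]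
        exact hcard _
      · rw [Fin.succAbove_of_le_castSucc _ _ hj,
          card_erase_of_mem (hD (hj.trans Fin.castSucc_lt_succ.le) hpt₀)]
        have := hcard j.succ
        have := hb (Fin.castSucc_lt_succ (i := j))
        rw [Fin.lt_def] at this
        omega
    obtain ⟨β, hβ, hβD, hβsum⟩ := ih (fun j => (D (t₀.succAbove j)).erase p)
      (fun j => b j.castSucc)
      (fun i j hij => erase_subset_erase _ (hD ((Fin.strictMono_succAbove t₀).monotone hij)))
      (hb.comp Fin.strictMono_castSucc) hcard'
    refine ⟨t₀.insertNth p β, ?_, ?_, ?_⟩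
    · rw [← Fin.cons_comp_cycleRange]
      refine (Fin.cons_injective_of_injective ?_ hβ).comp t₀.cycleRange.injective
      rintro ⟨j, hj⟩
      exact notMem_erase p _ (hj ▸ hβD j)
    · rw [Fin.forall_iff_succAbove t₀]
      exact ⟨by simpa using hpt₀, fun j => by simpa using mem_of_mem_erase (hβD j)⟩
    · rw [Fin.sum_univ_succAbove _ t₀, Fin.sum_univ_castSucc, add_comm]
      simp only [Fin.insertNth_apply_same, Fin.insertNth_apply_succAbove]
      exact add_le_add hβsum ((hpmin q hq).trans hqb)

theorem exists_finset_rank_sum_le_and_sum_le_rank_sum {M : Type*} (w w' : M → α)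
    (σ σ' : Fin m ≃ M) (hσ : Antitone (w ∘ σ)) (hσ' : Antitone (w' ∘ σ'))
    (R : Finset (Fin m)) :
    ∃ T : Finset M, ∑ i ∈ R, w' (σ' i) ≤ ∑ e ∈ T, w' e ∧ ∑ e ∈ T, w e ≤ ∑ i ∈ R, w (σ i) := by
  set r := R.orderEmbOfFin rfl
  have hR : ∀ f : Fin m → α, ∑ i ∈ R, f i = ∑ t, f (r t) := fun f => by
    conv_lhs => rw [← R.map_orderEmbOfFin_univ rfl]
    rw [sum_map]
    rfl
  obtain ⟨β, hβ, hβD, hβsum⟩ := exists_injective_mem_sum_le w σ hσ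
    (fun t => (Iic (r t)).map σ'.toEmbedding) r
    (fun s t hst => map_subset_map.mpr (Iic_subset_Iic.mpr (r.monotone hst))) r.strictMono
    (fun t => by simp)
  refine ⟨univ.map ⟨β, hβ⟩, ?_, ?_⟩
  · rw [hR, sum_map]
    refine sum_le_sum fun t _ => ?_
    obtain ⟨i, hi, hiβ⟩ := mem_map.mp (hβD t)
    simpa [← hiβ] using hσ' (mem_Iic.mp hi)
  · rw [hR, sum_map]
    exact hβsum

end Exchange

section MaximinShare

variable {M : Type*} {n m : ℕ} (F : Set (Fin n → Finset (Fin m))) (v : M → ℝ) (ρ : Fin m ≃ M)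

noncomputable def ordinalMaximinShare : ℝ :=
  sSup {x : ℝ | ∃ P ∈ F, ∀ j : Fin n, x ≤ ∑ i ∈ P j, v (ρ i)}

/-- In `ℝ`, both `sSup ∅` and `sSup Set.univ` are `0`. -/
theorem ordinalMaximinShare_eq_zero (h : F = ∅ ∨ IsEmpty (Fin n)) :
    ordinalMaximinShare F v ρ = 0 := by
  rcases h with rfl | h
  · simp [ordinalMaximinShare]
  rcases F.eq_empty_or_nonempty with rfl | ⟨P, hP⟩
  · simp [ordinalMaximinShare]
  have hX : {x : ℝ | ∃ P ∈ F, ∀ j : Fin n, x ≤ ∑ i ∈ P j, v (ρ i)} = Set.univ :=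
    Set.eq_univ_of_forall fun x => ⟨P, hP, fun j => h.elim j⟩
  rw [ordinalMaximinShare, hX, Real.sSup_univ]

theorem ordinalMaximinShare_le_sum (hv : ∀ e, 0 ≤ v e) :
    ordinalMaximinShare F v ρ ≤ ∑ i, v (ρ i) := by
  rcases isEmpty_or_nonempty (Fin n) with h | ⟨⟨j⟩⟩
  · rw [ordinalMaximinShare_eq_zero F v ρ (Or.inr h)]
    exact sum_nonneg fun i _ => hv _
  refine Real.sSup_le ?_ (sum_nonneg fun i _ => hv _)
  rintro x ⟨P, -, hx⟩
  exact (hx j).trans (sum_le_sum_of_subset_of_nonneg (subset_univ _) fun i _ _ => hv _)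

theorem le_ordinalMaximinShare [Nonempty (Fin n)] (hv : ∀ e, 0 ≤ v e) {P : Fin n → Finset (Fin m)}
    (hP : P ∈ F) {x : ℝ} (hx : ∀ j, x ≤ ∑ i ∈ P j, v (ρ i)) : x ≤ ordinalMaximinShare F v ρ := by
  refine le_csSup ⟨∑ i, v (ρ i), ?_⟩ ⟨P, hP, hx⟩
  rintro y ⟨Q, -, hy⟩
  exact (hy (Classical.arbitrary _)).trans
    (sum_le_sum_of_subset_of_nonneg (subset_univ _) fun i _ _ => hv _)

theorem exists_mem_forall_ordinalMaximinShare_le (hF : F.Nonempty) :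
    ∃ P ∈ F, ∀ j, ordinalMaximinShare F v ρ ≤ ∑ i ∈ P j, v (ρ i) := by
  let g : (Fin n → Finset (Fin m)) → ℝ := fun P => ⨅ j, ∑ i ∈ P j, v (ρ i)
  have hg : ∀ P j, g P ≤ ∑ i ∈ P j, v (ρ i) := fun P j => ciInf_le (Set.finite_range _).bddBelow j
  obtain ⟨P, hP, hPmax⟩ := Set.exists_max_image F g F.toFinite hF
  refine ⟨P, hP, fun j => csSup_le ⟨g P, P, hP, hg P⟩ ?_⟩
  have : Nonempty (Fin n) := ⟨j⟩
  rintro x ⟨Q, hQ, hx⟩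
  exact (le_ciInf hx).trans ((hPmax Q hQ).trans (hg P j))

theorem exists_finset_ordinalMaximinShare_le_and_sum_le (w w' : M → ℝ) (σ σ' : Fin m ≃ M)
    (hw : ∀ e, 0 ≤ w e) (hσ : Antitone (w ∘ σ)) (hσ' : Antitone (w' ∘ σ')) :
    ∃ T : Finset M, ordinalMaximinShare F w' σ' ≤ ∑ e ∈ T, w' e ∧
      ∑ e ∈ T, w e ≤ ordinalMaximinShare F w σ := by
  by_cases hdeg : F = ∅ ∨ IsEmpty (Fin n)
  · exact ⟨∅, by simp [ordinalMaximinShare_eq_zero F _ _ hdeg]⟩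
  rw [not_or, not_isEmpty_iff] at hdeg
  obtain ⟨hF, hn⟩ := hdeg
  obtain ⟨P, hP, hs'⟩ :=
    exists_mem_forall_ordinalMaximinShare_le F w' σ' (Set.nonempty_iff_ne_empty.mpr hF)
  obtain ⟨j, hj⟩ := Finite.exists_min fun j => ∑ i ∈ P j, w (σ i)
  obtain ⟨T, hT', hT⟩ := exists_finset_rank_sum_le_and_sum_le_rank_sum w w' σ σ' hσ hσ' (P j)
  exact ⟨T, (hs' j).trans hT', hT.trans (le_ordinalMaximinShare F w σ hw hP hj)⟩

end MaximinShare

theorem sInf_image_sum_le_sInf_image_sum {M : Type*} {v u : M → ℝ} (hv : ∀ e, 0 ≤ v e)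
    {s t : ℝ} {S₀ T : Finset M} (hS₀ : s ≤ ∑ e ∈ S₀, v e) (hTu : t ≤ ∑ e ∈ T, u e)
    (hTv : ∑ e ∈ T, v e ≤ s) :
    sInf ((fun S : Finset M => ∑ e ∈ S, v e) '' {S | t ≤ ∑ e ∈ S, u e}) ≤
      sInf ((fun S : Finset M => ∑ e ∈ S, v e) '' {S | s ≤ ∑ e ∈ S, v e}) := by
  refine le_csInf ⟨_, S₀, hS₀, rfl⟩ ?_
  rintro _ ⟨S, hS, rfl⟩
  have hbdd : BddBelow ((fun S : Finset M => ∑ e ∈ S, v e) '' {S | t ≤ ∑ e ∈ S, u e}) :=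
    ⟨0, by rintro _ ⟨S, -, rfl⟩; exact sum_nonneg fun e _ => hv e⟩
  calc _ ≤ ∑ e ∈ T, v e := csInf_le hbdd ⟨T, hTu, rfl⟩
    _ ≤ s := hTv
    _ ≤ ∑ e ∈ S, v e := hS

theorem ordinal_maximin_share_self_maximizing_general {M : Type*}
    {n m : ℕ} (F : Set (Fin n → Finset (Fin m)))
    (w w' : M → ℝ) (hw : ∀ e, 0 ≤ w e)
    (σ σ' : Fin m ≃ M)
    (hσ : ∀ i j : Fin m, i ≤ j → w (σ j) ≤ w (σ i))
    (hσ' : ∀ i j : Fin m, i ≤ j → w' (σ' j) ≤ w' (σ' i)) :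
    sInf ((fun S : Finset M => ∑ e ∈ S, w e) ''
        {S : Finset M |
          sSup {x : ℝ | ∃ P ∈ F, ∀ j : Fin n, x ≤ ∑ i ∈ P j, w' (σ' i)}
            ≤ ∑ e ∈ S, w' e})
      ≤ sInf ((fun S : Finset M => ∑ e ∈ S, w e) ''
        {S : Finset M |
          sSup {x : ℝ | ∃ P ∈ F, ∀ j : Fin n, x ≤ ∑ i ∈ P j, w (σ i)}
            ≤ ∑ e ∈ S, w e}) := by
  obtain ⟨T, hT', hT⟩ := exists_finset_ordinalMaximinShare_le_and_sum_le F w w' σ σ' hw hσ hσ'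
  refine sInf_image_sum_le_sInf_image_sum hw (S₀ := univ.map σ.toEmbedding) ?_ hT' hT
  rw [sum_map]
  exact ordinalMaximinShare_le_sum F w σ hw

/-- Every ordinal maximin share for additive valuations is self-maximizing.
Here `F` is a family of partitions of the index set `Fin m` into `n` parts; the
`F`-maximin share of an additive valuation with item values `w`, with items enumerated
in non-increasing value order by `σ`, is
`s(w) = sup { x | ∃ P ∈ F, every part of P (read through σ) has value ≥ x }`.
The conclusion states that the implied guarantee with any report `w'` is at most the
truthful share guarantee. -/
theorem ordinal_maximin_share_self_maximizing {M : Type*} [Fintype M] [DecidableEq M]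
    {n m : ℕ} (F : Set (Fin n → Finset (Fin m)))
    (hF : ∀ P ∈ F, (∀ i j, i ≠ j → Disjoint (P i) (P j)) ∧
      Finset.univ.biUnion P = Finset.univ)
    (w w' : M → ℝ) (hw : ∀ e, 0 ≤ w e) (hw' : ∀ e, 0 ≤ w' e)
    (σ σ' : Fin m ≃ M)
    (hσ : ∀ i j : Fin m, i ≤ j → w (σ j) ≤ w (σ i))
    (hσ' : ∀ i j : Fin m, i ≤ j → w' (σ' j) ≤ w' (σ' i)) :
    sInf ((fun S : Finset M => ∑ e ∈ S, w e) ''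
        {S : Finset M |
          sSup {x : ℝ | ∃ P ∈ F, ∀ j : Fin n, x ≤ ∑ i ∈ P j, w' (σ' i)}
            ≤ ∑ e ∈ S, w' e})
      ≤ sInf ((fun S : Finset M => ∑ e ∈ S, w e) ''
        {S : Finset M |
          sSup {x : ℝ | ∃ P ∈ F, ∀ j : Fin n, x ≤ ∑ i ∈ P j, w (σ i)}
            ≤ ∑ e ∈ S, w e}) :=
  ordinal_maximin_share_self_maximizing_general F w w' hw σ σ' hσ hσ'
end

section
/- For two agents, every ordinal maximin share is feasible: given a family F of partitions of [m] into 2 parts and two additive valuations v_1, v_2 over a set M of m items, there exists a partition (A_1, A_2) of M such that v_i(A_i) ≥ s_F(v_i) for both i, where s_F(v) = max_{P ∈ F} min_j v(B_j^P) with items sorted in non-increasing v-value. -/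
/-!
Let `B` be a partition in `F` that is best for agent 1, read through agent 1's ordering; both
of its bundles are worth at least `s_F(w₁)` to agent 1. Agent 2's share is at most half of
her total value, since every partition has a bundle worth at most that much, so agent 2 can
take whichever bundle of `B` she values at least half of the total, and agent 1 the other.
-/

open Finset

section MinShare

variable {α : Type*} (F : Set α) (f g : α → ℝ)

theorem sSup_le_of_forall_min_le {c : ℝ} (hF : F.Nonempty)
    (h : ∀ B ∈ F, min (f B) (g B) ≤ c) :
    sSup {x : ℝ | ∃ B ∈ F, x ≤ f B ∧ x ≤ g B} ≤ c :=
  csSup_le (hF.elim fun B hB => ⟨min (f B) (g B), B, hB, min_le_left _ _, min_le_right _ _⟩)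
    fun _ ⟨B, hB, hf, hg⟩ => (le_min hf hg).trans (h B hB)

theorem exists_mem_sSup_le_min (hfin : F.Finite) (hF : F.Nonempty) :
    ∃ B ∈ F, sSup {x : ℝ | ∃ B ∈ F, x ≤ f B ∧ x ≤ g B} ≤ min (f B) (g B) := by
  obtain ⟨B, hB, hmax⟩ := Set.exists_max_image F (fun B => min (f B) (g B)) hfin hF
  exact ⟨B, hB, sSup_le_of_forall_min_le F f g hF hmax⟩

end MinShare

section HalfSum

variable {ι : Type*} [Fintype ι] [DecidableEq ι] (u : ι → ℝ)

theorem sSup_le_half_sum {F : Set (Finset ι)} (hF : F.Nonempty) :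
    sSup {x : ℝ | ∃ B ∈ F, x ≤ ∑ i ∈ B, u i ∧ x ≤ ∑ i ∈ Bᶜ, u i} ≤ (∑ i, u i) / 2 :=
  sSup_le_of_forall_min_le F _ _ hF fun B _ => by
    have := sum_add_sum_compl B u
    linarith [min_le_left (∑ i ∈ B, u i) (∑ i ∈ Bᶜ, u i),
      min_le_right (∑ i ∈ B, u i) (∑ i ∈ Bᶜ, u i)]

theorem half_sum_le_sum_or_sum_compl (A : Finset ι) :
    (∑ i, u i) / 2 ≤ ∑ i ∈ A, u i ∨ (∑ i, u i) / 2 ≤ ∑ i ∈ Aᶜ, u i := by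
  have := sum_add_sum_compl A u
  by_contra! h
  linarith [h.1, h.2]

end HalfSum

theorem Finset.compl_map_equiv {ι M : Type*} [Fintype ι] [DecidableEq ι] [Fintype M]
    [DecidableEq M] (σ : ι ≃ M) (B : Finset ι) :
    (B.map σ.toEmbedding)ᶜ = Bᶜ.map σ.toEmbedding := by
  ext e
  simp

theorem ordinal_maximin_share_feasible_two_agents_general {M : Type*} [Fintype M] [DecidableEq M]
    {m : ℕ} (F : Set (Finset (Fin m)))
    (w₁ w₂ : M → ℝ) (hw₁ : ∀ e, 0 ≤ w₁ e)
    (σ₁ σ₂ : Fin m ≃ M) :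
    ∃ A : Finset M,
      sSup {x : ℝ | ∃ B ∈ F, x ≤ ∑ i ∈ B, w₁ (σ₁ i) ∧ x ≤ ∑ i ∈ Bᶜ, w₁ (σ₁ i)}
        ≤ ∑ e ∈ A, w₁ e ∧
      sSup {x : ℝ | ∃ B ∈ F, x ≤ ∑ i ∈ B, w₂ (σ₂ i) ∧ x ≤ ∑ i ∈ Bᶜ, w₂ (σ₂ i)}
        ≤ ∑ e ∈ Aᶜ, w₂ e := by
  rcases F.eq_empty_or_nonempty with rfl | hF
  -- with no partitions, both shares are the junk value `sSup ∅ = 0`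
  · exact ⟨univ, by simpa using sum_nonneg fun e _ => hw₁ e, by simp⟩
  obtain ⟨B, -, hshare₁⟩ := exists_mem_sSup_le_min F _ _ F.toFinite hF
  have hshare₂ := sSup_le_half_sum (fun i => w₂ (σ₂ i)) hF
  rw [Equiv.sum_comp σ₂ w₂] at hshare₂
  set A := B.map σ₁.toEmbedding
  have hA : ∑ e ∈ A, w₁ e = ∑ i ∈ B, w₁ (σ₁ i) := sum_map _ _ _
  have hAc : ∑ e ∈ Aᶜ, w₁ e = ∑ i ∈ Bᶜ, w₁ (σ₁ i) := by
    rw [compl_map_equiv, sum_map]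
    rfl
  rcases half_sum_le_sum_or_sum_compl w₂ Aᶜ with h | h
  · exact ⟨A, hA ▸ hshare₁.trans (min_le_left _ _), hshare₂.trans h⟩
  · exact ⟨Aᶜ, hAc ▸ hshare₁.trans (min_le_right _ _), hshare₂.trans h⟩

/-- For two agents, every ordinal maximin share is feasible. Here `F` is a family of
partitions of the index set `Fin m` into two parts, each represented by the finset `B`
of indices of its first part (the second part being `Bᶜ`). For an additive valuation
with item values `w` and a non-increasing enumeration `σ` of the items, the ordinal
maximin share is `s_F(w) = sup { x | ∃ B ∈ F, both parts (read through σ) have value ≥ x }`.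
There is a partition `(A, Aᶜ)` of the items giving each agent at least her share. -/
theorem ordinal_maximin_share_feasible_two_agents {M : Type*} [Fintype M] [DecidableEq M]
    {m : ℕ} (F : Set (Finset (Fin m)))
    (w₁ w₂ : M → ℝ) (hw₁ : ∀ e, 0 ≤ w₁ e) (hw₂ : ∀ e, 0 ≤ w₂ e)
    (σ₁ σ₂ : Fin m ≃ M)
    (hσ₁ : ∀ i j : Fin m, i ≤ j → w₁ (σ₁ j) ≤ w₁ (σ₁ i))
    (hσ₂ : ∀ i j : Fin m, i ≤ j → w₂ (σ₂ j) ≤ w₂ (σ₂ i)) :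
    ∃ A : Finset M,
      sSup {x : ℝ | ∃ B ∈ F, x ≤ ∑ i ∈ B, w₁ (σ₁ i) ∧ x ≤ ∑ i ∈ Bᶜ, w₁ (σ₁ i)}
        ≤ ∑ e ∈ A, w₁ e ∧
      sSup {x : ℝ | ∃ B ∈ F, x ≤ ∑ i ∈ B, w₂ (σ₂ i) ∧ x ≤ ∑ i ∈ Bᶜ, w₂ (σ₂ i)}
        ≤ ∑ e ∈ Aᶜ, w₂ e :=
  ordinal_maximin_share_feasible_two_agents_general F w₁ w₂ hw₁ σ₁ σ₂
end

section
/- Let P^i = (B_1^i, B_2^i, B_3^i) and P^j = (B_1^j, B_2^j, B_3^j) be two partitions of an ordered list of m items into three bundles, each specified by four cutting points 0 ≤ c_1 ≤ c_2 ≤ c_3 ≤ c_4 ≤ m, where B_1 = {e_1,...,e_{c_1}} ∪ {e_{c_4+1},...,e_m}, B_2 = {e_{c_1+1},...,e_{c_2}} ∪ {e_{c_3+1},...,e_{c_4}}, B_3 = {e_{c_2+1},...,e_{c_3}}. Then P^i and P^j are not fully intersecting: there exist indices a, b ∈ {1,2,3} with B_a^i ∩ B_b^j = ∅. -/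
/-!
Bundle 2 of a cut partition is the interval `[c₂, c₃)`, and bundle 0 avoids `[c₁, c₄)`. By
symmetry let `c₂ ≤ d₂`. If the two middle intervals do not meet, the bundles 2 are disjoint.
Otherwise, if `d₃ ≤ c₄`, the middle interval of `d` lies in `[c₁, c₄)`, and symmetrically if
`d₁ ≤ c₂`. In the remaining case `c₂ < d₁`, `d₂ < c₃` and `c₄ < d₃`, so each piece
`[c₁, c₂)`, `[c₃, c₄)` of bundle 1 of `c` lies in a gap between the pieces of bundle 1 of `d`.
-/

/-- The 3-bundle partition of the `m` ordered items determined by four cutting points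
`c₁ ≤ c₂ ≤ c₃ ≤ c₄ ≤ m`: bundle 0 is `{e_1,…,e_{c₁}} ∪ {e_{c₄+1},…,e_m}`, bundle 1 is
`{e_{c₁+1},…,e_{c₂}} ∪ {e_{c₃+1},…,e_{c₄}}`, and bundle 2 is `{e_{c₂+1},…,e_{c₃}}`
(0-based indices in `Fin m`). -/
def cutPartition (m : ℕ) (c₁ c₂ c₃ c₄ : ℕ) : Fin 3 → Finset (Fin m)
  | 0 => Finset.univ.filter (fun i : Fin m => i.val < c₁ ∨ c₄ ≤ i.val)
  | 1 => Finset.univ.filter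
      (fun i : Fin m => (c₁ ≤ i.val ∧ i.val < c₂) ∨ (c₃ ≤ i.val ∧ i.val < c₄))
  | 2 => Finset.univ.filter (fun i : Fin m => c₂ ≤ i.val ∧ i.val < c₃)

section CutPartition

variable {m : ℕ} {c₁ c₂ c₃ c₄ d₁ d₂ d₃ d₄ : ℕ} {i : Fin m}

@[simp]
theorem mem_cutPartition_zero :
    i ∈ cutPartition m c₁ c₂ c₃ c₄ 0 ↔ i.val < c₁ ∨ c₄ ≤ i.val := by
  simp [cutPartition]

@[simp]
theorem mem_cutPartition_one :
    i ∈ cutPartition m c₁ c₂ c₃ c₄ 1 ↔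
      (c₁ ≤ i.val ∧ i.val < c₂) ∨ (c₃ ≤ i.val ∧ i.val < c₄) := by
  simp [cutPartition]

@[simp]
theorem mem_cutPartition_two :
    i ∈ cutPartition m c₁ c₂ c₃ c₄ 2 ↔ c₂ ≤ i.val ∧ i.val < c₃ := by
  simp [cutPartition]

theorem disjoint_cutPartition_two_two (h : c₃ ≤ d₂) :
    Disjoint (cutPartition m c₁ c₂ c₃ c₄ 2) (cutPartition m d₁ d₂ d₃ d₄ 2) :=
  Finset.disjoint_left.mpr fun _ hc hd => by simp only [mem_cutPartition_two] at hc hd; omega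

theorem disjoint_cutPartition_zero_two (h₁ : c₁ ≤ d₂) (h₄ : d₃ ≤ c₄) :
    Disjoint (cutPartition m c₁ c₂ c₃ c₄ 0) (cutPartition m d₁ d₂ d₃ d₄ 2) :=
  Finset.disjoint_left.mpr fun _ hc hd => by
    simp only [mem_cutPartition_zero, mem_cutPartition_two] at hc hd; omega

theorem disjoint_cutPartition_one_one (hd₁ : d₁ ≤ d₂) (hd₂ : d₂ ≤ d₃)
    (h₂ : c₂ ≤ d₁) (h₃ : d₂ ≤ c₃) (h₄ : c₄ ≤ d₃) :
    Disjoint (cutPartition m c₁ c₂ c₃ c₄ 1) (cutPartition m d₁ d₂ d₃ d₄ 1) :=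
  Finset.disjoint_left.mpr fun _ hc hd => by simp only [mem_cutPartition_one] at hc hd; omega

end CutPartition

theorem cut_partitions_not_fully_intersecting_general (m : ℕ)
    (c₁ c₂ c₃ c₄ : ℕ) (hc₁ : c₁ ≤ c₂) (hc₂ : c₂ ≤ c₃) (hc₃ : c₃ ≤ c₄)
    (d₁ d₂ d₃ d₄ : ℕ) (hd₁ : d₁ ≤ d₂) (hd₂ : d₂ ≤ d₃) (hd₃ : d₃ ≤ d₄) :
    ∃ a b : Fin 3, Disjoint (cutPartition m c₁ c₂ c₃ c₄ a) (cutPartition m d₁ d₂ d₃ d₄ b) := by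
  wlog h : c₂ ≤ d₂ generalizing c₁ c₂ c₃ c₄ d₁ d₂ d₃ d₄
  · obtain ⟨a, b, hab⟩ := this d₁ d₂ d₃ d₄ hd₁ hd₂ hd₃ c₁ c₂ c₃ c₄ hc₁ hc₂ hc₃ (by omega)
    exact ⟨b, a, hab.symm⟩
  by_cases h₃ : c₃ ≤ d₂
  · exact ⟨2, 2, disjoint_cutPartition_two_two h₃⟩
  by_cases h₄ : d₃ ≤ c₄
  · exact ⟨0, 2, disjoint_cutPartition_zero_two (by omega) h₄⟩
  by_cases h₁ : d₁ ≤ c₂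
  · exact ⟨2, 0, (disjoint_cutPartition_zero_two h₁ (by omega)).symm⟩
  exact ⟨1, 1, disjoint_cutPartition_one_one hd₁ hd₂ (by omega) (by omega) (by omega)⟩

/-- Two 3-bundle partitions of an ordered list of items, each given by four cutting
points, are never fully intersecting: some bundle of the first is disjoint from some
bundle of the second. -/
theorem cut_partitions_not_fully_intersecting (m : ℕ)
    (c₁ c₂ c₃ c₄ : ℕ) (hc₁ : c₁ ≤ c₂) (hc₂ : c₂ ≤ c₃) (hc₃ : c₃ ≤ c₄) (hc₄ : c₄ ≤ m)
    (d₁ d₂ d₃ d₄ : ℕ) (hd₁ : d₁ ≤ d₂) (hd₂ : d₂ ≤ d₃) (hd₃ : d₃ ≤ d₄) (hd₄ : d₄ ≤ m) :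
    ∃ a b : Fin 3, Disjoint (cutPartition m c₁ c₂ c₃ c₄ a) (cutPartition m d₁ d₂ d₃ d₄ b) :=
  cut_partitions_not_fully_intersecting_general m c₁ c₂ c₃ c₄ hc₁ hc₂ hc₃ d₁ d₂ d₃ d₄ hd₁ hd₂ hd₃
end

section
/- Let three agents have additive valuations v_1, v_2, v_3 over a finite set M, and for each agent i let P^i = (B_1^i, B_2^i, B_3^i) be a partition of M into three bundles such that no two of the partitions P^1, P^2, P^3 are fully intersecting. Then there exists a partition (A_1, A_2, A_3) of M such that v_i(A_i) ≥ min(v_i(B_1^i), v_i(B_2^i), v_i(B_3^i)) for every agent i. -/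
/-!
Let `m i` be agent `i`'s share. Each bundle of `P i` is worth at least `m i` to `i`, so the
whole set is worth at least `3 m i` and the complement of one of her bundles at least `2 m i`.
Suppose no allocation gives every agent her share. If a bundle `X` of `i` and a bundle `Y` of `j`
are disjoint, the third agent `k` cannot be content with the rest `R`, so she values `X` or `Y`
at least `m k`, say `X`; then `i` cannot be content with `R` and so values `Y` at least `m i`,
and `j` cannot be content with `R` and so values `X` at least `m j`: the two agents like each
other's bundles. Applying this to the disjoint pairs of bundles given by each pair of agents,
either some partition has two distinct bundles liked by the two other agents, who take them
while its owner takes its third bundle, or one bundle from each partition is picked and these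
three are pairwise disjoint; each is liked by an agent other than its owner, and rotating them
along gives everybody her share.
-/

open Finset Function

section

variable {M : Type*}

def Feasible {ι : Type*} (w : ι → M → ℝ) (m : ι → ℝ) : Prop :=
  ∃ S : ι → Finset M, Pairwise (Disjoint on S) ∧ ∀ i, m i ≤ ∑ e ∈ S i, w i e

theorem feasible_of_disjoint_triple {w : Fin 3 → M → ℝ} {m : Fin 3 → ℝ} {i j k : Fin 3}
    (hij : i ≠ j) (hik : i ≠ k) (hjk : j ≠ k)
    {X Y Z : Finset M} (hXY : Disjoint X Y) (hXZ : Disjoint X Z) (hYZ : Disjoint Y Z)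
    (hX : m i ≤ ∑ e ∈ X, w i e) (hY : m j ≤ ∑ e ∈ Y, w j e) (hZ : m k ≤ ∑ e ∈ Z, w k e) :
    Feasible w m := by
  have hcases : ∀ l, l = i ∨ l = j ∨ l = k := by omega
  refine ⟨fun l => if l = i then X else if l = j then Y else Z, fun l l' hll' => ?_, fun l => ?_⟩
  · rcases hcases l with rfl | rfl | rfl <;> rcases hcases l' with rfl | rfl | rfl <;>
      simp_all [onFun, disjoint_comm, Ne.symm]
  · rcases hcases l with rfl | rfl | rfl <;> simp_all [Ne.symm]

theorem feasible_of_others_value_distinct_parts {w : Fin 3 → M → ℝ} {m : Fin 3 → ℝ}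
    {P : Fin 3 → Fin 3 → Finset M} {i j k a b : Fin 3}
    (hPdisj : ∀ i, ∀ a b : Fin 3, a ≠ b → Disjoint (P i a) (P i b))
    (hm : ∀ i a, m i ≤ ∑ e ∈ P i a, w i e) (hij : i ≠ j) (hik : i ≠ k) (hjk : j ≠ k)
    (hab : a ≠ b) (hj : m j ≤ ∑ e ∈ P i a, w j e) (hk : m k ≤ ∑ e ∈ P i b, w k e) :
    Feasible w m := by
  obtain ⟨c, hca, hcb⟩ : ∃ c, c ≠ a ∧ c ≠ b :=
    (by decide : ∀ a b : Fin 3, ∃ c, c ≠ a ∧ c ≠ b) a b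
  exact feasible_of_disjoint_triple hij hik hjk (hPdisj i c a hca) (hPdisj i c b hcb)
    (hPdisj i a b hab) (hm i c) hj hk

variable [Fintype M] [DecidableEq M]

theorem Feasible.exists_partition {ι : Type*} [Fintype ι] [DecidableEq ι] [Nonempty ι]
    {w : ι → M → ℝ} {m : ι → ℝ} (h : Feasible w m) (hw : ∀ i e, 0 ≤ w i e) :
    ∃ A : ι → Finset M, (∀ i j, i ≠ j → Disjoint (A i) (A j)) ∧ univ.biUnion A = univ ∧
      ∀ i, m i ≤ ∑ e ∈ A i, w i e := by
  obtain ⟨S, hS, hm⟩ := h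
  obtain ⟨i₀⟩ := ‹Nonempty ι›
  set T := (univ.erase i₀).biUnion S
  have hST : ∀ j, j ≠ i₀ → S j ⊆ T := fun j hj => subset_biUnion_of_mem S (by simp [hj])
  refine ⟨update S i₀ Tᶜ, fun i j hij => ?_, ?_, fun i => ?_⟩
  · rcases eq_or_ne i i₀ with rfl | hi
    · simpa [hij.symm] using disjoint_compl_left.mono_right (hST j hij.symm)
    rcases eq_or_ne j i₀ with rfl | hj
    · simpa [hi] using disjoint_compl_right.mono_left (hST i hi)
    · simpa [hi, hj] using hS hij
  · refine eq_univ_of_forall fun x => mem_biUnion.2 ?_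
    by_cases hx : x ∈ T
    · obtain ⟨j, hj, hxj⟩ := mem_biUnion.1 hx
      exact ⟨j, mem_univ j, by simpa [ne_of_mem_erase hj] using hxj⟩
    · exact ⟨i₀, mem_univ i₀, by simpa using hx⟩
  · rcases eq_or_ne i i₀ with rfl | hi
    · have hsub : S i ⊆ Tᶜ := subset_compl_iff_disjoint_right.2 <|
        disjoint_biUnion_right _ _ _ |>.2 fun j hj => hS (ne_of_mem_erase hj).symm
      simpa using (hm i).trans (sum_le_sum_of_subset_of_nonneg hsub fun e _ _ => hw i e)
    · simpa [hi] using hm i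

theorem sum_compl_eq_add_sum_compl_union {β : Type*} [AddCommMonoid β] (f : M → β)
    {X Y : Finset M} (hXY : Disjoint X Y) :
    ∑ e ∈ Xᶜ, f e = ∑ e ∈ Y, f e + ∑ e ∈ (X ∪ Y)ᶜ, f e := by
  have hsplit : Xᶜ = Y ∪ (X ∪ Y)ᶜ := by
    ext x
    have : x ∈ X → x ∉ Y := fun h => disjoint_left.1 hXY h
    simp only [mem_compl, mem_union]
    tauto
  rw [hsplit, sum_union (disjoint_compl_right_iff.2 subset_union_right)]

section Crossing

variable {w : Fin 3 → M → ℝ} {m : Fin 3 → ℝ} {i j k : Fin 3} {X Y : Finset M}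

theorem feasible_or_swap_of_third_values_left (hij : i ≠ j) (hik : i ≠ k) (hjk : j ≠ k)
    (hXY : Disjoint X Y) (hXc : 2 * m i ≤ ∑ e ∈ Xᶜ, w i e) (hY : m j ≤ ∑ e ∈ Y, w j e)
    (hYc : 2 * m j ≤ ∑ e ∈ Yᶜ, w j e) (hkX : m k ≤ ∑ e ∈ X, w k e) :
    Feasible w m ∨ (m i ≤ ∑ e ∈ Y, w i e ∧ m j ≤ ∑ e ∈ X, w j e) := by
  set R := (X ∪ Y)ᶜ
  have hXR : Disjoint X R := disjoint_compl_right_iff.2 subset_union_left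
  have hYR : Disjoint Y R := disjoint_compl_right_iff.2 subset_union_right
  by_cases hiR : m i ≤ ∑ e ∈ R, w i e
  · exact .inl (feasible_of_disjoint_triple hij hik hjk hYR.symm hXR.symm hXY.symm hiR hY hkX)
  have hiY : m i ≤ ∑ e ∈ Y, w i e := by
    linarith [sum_compl_eq_add_sum_compl_union (w i) hXY]
  by_cases hjR : m j ≤ ∑ e ∈ R, w j e
  · exact .inl (feasible_of_disjoint_triple hij hik hjk hYR hXY.symm hXR.symm hiY hjR hkX)
  have hjX : m j ≤ ∑ e ∈ X, w j e := by
    linarith [union_comm X Y ▸ sum_compl_eq_add_sum_compl_union (w j) hXY.symm]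
  exact .inr ⟨hiY, hjX⟩

theorem feasible_or_swap_of_disjoint (hij : i ≠ j) (hik : i ≠ k) (hjk : j ≠ k)
    (hXY : Disjoint X Y) (hX : m i ≤ ∑ e ∈ X, w i e) (hXc : 2 * m i ≤ ∑ e ∈ Xᶜ, w i e)
    (hY : m j ≤ ∑ e ∈ Y, w j e) (hYc : 2 * m j ≤ ∑ e ∈ Yᶜ, w j e)
    (hk : 3 * m k ≤ ∑ e, w k e) :
    Feasible w m ∨ (m i ≤ ∑ e ∈ Y, w i e ∧ m j ≤ ∑ e ∈ X, w j e) := by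
  set R := (X ∪ Y)ᶜ
  have hXR : Disjoint X R := disjoint_compl_right_iff.2 subset_union_left
  have hYR : Disjoint Y R := disjoint_compl_right_iff.2 subset_union_right
  by_cases hkR : m k ≤ ∑ e ∈ R, w k e
  · exact .inl (feasible_of_disjoint_triple hij hik hjk hXY hXR hYR hX hY hkR)
  have hkXY : m k ≤ ∑ e ∈ X, w k e ∨ m k ≤ ∑ e ∈ Y, w k e := by
    by_contra! h
    have htotal := sum_add_sum_compl (X ∪ Y) (w k)
    rw [sum_union hXY] at htotal
    linarith
  rcases hkXY with hkX | hkY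
  · exact feasible_or_swap_of_third_values_left hij hik hjk hXY hXc hY hYc hkX
  · have := feasible_or_swap_of_third_values_left hij.symm hjk hik hXY.symm hYc hX hXc hkY
    exact this.imp_right And.symm

end Crossing

section Partition

variable {P : Fin 3 → Finset M} {f : M → ℝ} {c : ℝ}

theorem sum_univ_eq_sum_parts (hdisj : ∀ a b, a ≠ b → Disjoint (P a) (P b))
    (hcover : univ.biUnion P = univ) :
    ∑ e, f e = ∑ e ∈ P 0, f e + ∑ e ∈ P 1, f e + ∑ e ∈ P 2, f e := by
  rw [← Fin.sum_univ_three (fun a => ∑ e ∈ P a, f e),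
    ← sum_biUnion fun a _ b _ hab => hdisj a b hab, hcover]

theorem three_mul_le_sum_univ (hdisj : ∀ a b, a ≠ b → Disjoint (P a) (P b))
    (hcover : univ.biUnion P = univ) (hc : ∀ a, c ≤ ∑ e ∈ P a, f e) : 3 * c ≤ ∑ e, f e := by
  linarith [sum_univ_eq_sum_parts (f := f) hdisj hcover, hc 0, hc 1, hc 2]

theorem two_mul_le_sum_compl (hdisj : ∀ a b, a ≠ b → Disjoint (P a) (P b))
    (hcover : univ.biUnion P = univ) (hc : ∀ a, c ≤ ∑ e ∈ P a, f e) (a : Fin 3) :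
    2 * c ≤ ∑ e ∈ (P a)ᶜ, f e := by
  have hsplit := sum_add_sum_compl (P a) f
  have := sum_univ_eq_sum_parts (f := f) hdisj hcover
  fin_cases a <;> simp only [Fin.zero_eta, Fin.mk_one, Fin.reduceFinMk] at hsplit ⊢ <;>
    linarith [hc 0, hc 1, hc 2]

end Partition

theorem feasible_or_swap_of_disjoint_parts {w : Fin 3 → M → ℝ} {m : Fin 3 → ℝ}
    {P : Fin 3 → Fin 3 → Finset M} {i j k a b : Fin 3}
    (hPdisj : ∀ i, ∀ a b : Fin 3, a ≠ b → Disjoint (P i a) (P i b))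
    (hPcover : ∀ i, univ.biUnion (P i) = univ) (hm : ∀ i a, m i ≤ ∑ e ∈ P i a, w i e)
    (hij : i ≠ j) (hik : i ≠ k) (hjk : j ≠ k) (hab : Disjoint (P i a) (P j b)) :
    Feasible w m ∨ (m i ≤ ∑ e ∈ P j b, w i e ∧ m j ≤ ∑ e ∈ P i a, w j e) :=
  feasible_or_swap_of_disjoint hij hik hjk hab (hm i a)
    (two_mul_le_sum_compl (hPdisj i) (hPcover i) (hm i) a) (hm j b)
    (two_mul_le_sum_compl (hPdisj j) (hPcover j) (hm j) b)
    (three_mul_le_sum_univ (hPdisj k) (hPcover k) (hm k))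

end

/-- Three agents with additive valuations `w i`, each with a 3-bundle partition `P i`
of the items, such that no two of the partitions are fully intersecting (fully
intersecting meaning every bundle of one intersects every bundle of the other).
Then there is an allocation giving each agent `i` a bundle of value at least the
minimum value (by `w i`) of a bundle in her own partition `P i`. -/
theorem not_fully_intersecting_implies_feasible {M : Type*} [Fintype M] [DecidableEq M]
    (w : Fin 3 → M → ℝ) (hw : ∀ i e, 0 ≤ w i e)
    (P : Fin 3 → Fin 3 → Finset M)
    (hPdisj : ∀ i, ∀ a b : Fin 3, a ≠ b → Disjoint (P i a) (P i b))
    (hPcover : ∀ i, Finset.univ.biUnion (P i) = Finset.univ)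
    (hNFI : ∀ i j : Fin 3, i ≠ j → ¬ (∀ a b : Fin 3, ((P i a) ∩ (P j b)).Nonempty)) :
    ∃ A : Fin 3 → Finset M,
      (∀ i j : Fin 3, i ≠ j → Disjoint (A i) (A j)) ∧
      Finset.univ.biUnion A = Finset.univ ∧
      ∀ i : Fin 3,
        min (min (∑ e ∈ P i 0, w i e) (∑ e ∈ P i 1, w i e)) (∑ e ∈ P i 2, w i e)
          ≤ ∑ e ∈ A i, w i e := by
  set m : Fin 3 → ℝ := fun i =>
    min (min (∑ e ∈ P i 0, w i e) (∑ e ∈ P i 1, w i e)) (∑ e ∈ P i 2, w i e)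
  have hm : ∀ i a, m i ≤ ∑ e ∈ P i a, w i e := by
    intro i a
    fin_cases a <;> simp [m]
  suffices hF : Feasible w m from hF.exists_partition hw
  have hcross : ∀ i j, i ≠ j → ∃ a b, Disjoint (P i a) (P j b) := fun i j hij => by
    simpa only [not_forall, not_nonempty_iff_eq_empty, ← disjoint_iff_inter_eq_empty]
      using hNFI i j hij
  obtain ⟨a, b, hab⟩ := hcross 0 1 (by decide)
  obtain ⟨a', c, hac⟩ := hcross 0 2 (by decide)
  obtain ⟨b', c', hbc⟩ := hcross 1 2 (by decide)
  by_contra hF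
  obtain ⟨h0b, h1a⟩ := (feasible_or_swap_of_disjoint_parts hPdisj hPcover hm (k := 2)
    (by decide) (by decide) (by decide) hab).resolve_left hF
  obtain ⟨h0c, h2a'⟩ := (feasible_or_swap_of_disjoint_parts hPdisj hPcover hm (k := 1)
    (by decide) (by decide) (by decide) hac).resolve_left hF
  obtain ⟨h1c', h2b'⟩ := (feasible_or_swap_of_disjoint_parts hPdisj hPcover hm (k := 0)
    (by decide) (by decide) (by decide) hbc).resolve_left hF
  apply hF
  obtain ha | rfl := ne_or_eq a a'
  · exact feasible_of_others_value_distinct_parts hPdisj hm (i := 0) (j := 1) (k := 2)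
      (by decide) (by decide) (by decide) ha h1a h2a'
  obtain hb | rfl := ne_or_eq b b'
  · exact feasible_of_others_value_distinct_parts hPdisj hm (i := 1) (j := 0) (k := 2)
      (by decide) (by decide) (by decide) hb h0b h2b'
  obtain hc | rfl := ne_or_eq c c'
  · exact feasible_of_others_value_distinct_parts hPdisj hm (i := 2) (j := 0) (k := 1)
      (by decide) (by decide) (by decide) hc h0c h1c'
  exact feasible_of_disjoint_triple (i := 0) (j := 1) (k := 2) (by decide) (by decide)
    (by decide) hac.symm hbc.symm hab h0c h1a h2b'
end

section
/- For the class of additive valuations over goods and every n ≥ 2 and 1 ≤ q ≤ n, the nested share NS_{n,q}(v) is at least a 2n/(3n−1) fraction of MMS_n(v) for every additive valuation v. -/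
/-!
Only the nested partitions with `k = n` are needed. Starting from `n` disjoint bundles worth `V`
each, write `c = 2n V / (3n - 1)` and argue by induction on `n`. If item `n - 1` is worth `c`,
singletons do it. If item `0` is, it becomes a bundle on its own, and dropping it together with
the bundle that contained it leaves `n - 1` bundles worth `V`. If items `n - 1` and `n` together
are, they form a bundle, and an exchange argument again leaves `n - 1` bundles worth `V` among the
other items. Otherwise every item is worth less than `c` and every item from `n` on less than
`c / 2`, so filling the bundles of items `n - 1, …, 1` greedily overshoots `c` by less than
`c / 2`. Since the total is at least `n V = (3n - 1) c / 2`, what is left for item `0` is worth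
more than `c` (and, by the same count, the greedy filling never runs out of items early).
-/

/-- The maximin share for `n` agents of the additive valuation on `Fin m` with item
values `w` (items indexed in non-increasing value order). -/
noncomputable def MMSn (n m : ℕ) (w : Fin m → ℝ) : ℝ :=
  sSup {x : ℝ | ∃ P : Fin n → Finset (Fin m),
    (∀ i j, i ≠ j → Disjoint (P i) (P j)) ∧
    Finset.univ.biUnion P = Finset.univ ∧
    ∀ j, x ≤ ∑ i ∈ P j, w i}

/-- The nested share `NS_{n,q}` of the additive valuation on `Fin m` with item values
`w` sorted in non-increasing order: the best min-bundle value over partitions obtained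
by choosing `k` with `n - q < k ≤ m`, a consecutive partition of the prefix
`{e_1,…,e_k}` given by monotone cutpoints `z` (with `z 0 = 0`, `z n = k`, and the first
`n - q` blocks singletons, i.e. `z j = j` for `j ≤ n - q`), and a consecutive partition
of the suffix given by monotone cutpoints `t` (with `t 0 = k`, `t n = m`) assigned to
the bundles in reverse order; bundle `j` (0-based) consists of the prefix block
`[z j, z (j+1))` together with the suffix block `[t (n-1-j), t (n-j))`. -/
noncomputable def NS (n q m : ℕ) (w : Fin m → ℝ) : ℝ :=
  sSup {x : ℝ | ∃ (k : ℕ) (z t : ℕ → ℕ),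
    n - q < k ∧ k ≤ m ∧
    Monotone z ∧ z 0 = 0 ∧ z n = k ∧ (∀ j, j ≤ n - q → z j = j) ∧
    Monotone t ∧ t 0 = k ∧ t n = m ∧
    ∀ j : Fin n, x ≤ ∑ i ∈ Finset.univ.filter (fun i : Fin m =>
      (z j.val ≤ i.val ∧ i.val < z (j.val + 1)) ∨
      (t (n - 1 - j.val) ≤ i.val ∧ i.val < t (n - j.val))), w i}

open Finset Function

noncomputable def nsRatio (n : ℕ) : ℝ := 2 * n / (3 * n - 1)

lemma nsRatio_pos {n : ℕ} (hn : 0 < n) : 0 < nsRatio n := by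
  have : (1 : ℝ) ≤ n := by exact_mod_cast hn
  unfold nsRatio
  apply div_pos <;> linarith

lemma nsRatio_one : nsRatio 1 = 1 := by norm_num [nsRatio]

lemma nsRatio_succ_le {n : ℕ} (hn : 0 < n) : nsRatio (n + 1) ≤ nsRatio n := by
  have : (1 : ℝ) ≤ n := by exact_mod_cast hn
  unfold nsRatio
  rw [div_le_div_iff₀ (by push_cast; linarith) (by linarith)]
  push_cast
  nlinarith

lemma mul_nsRatio_succ (n : ℕ) : (3 * n + 2) * nsRatio (n + 1) = 2 * (n + 1) := by
  have : (0 : ℝ) < 3 * (n + 1) - 1 := by linarith [n.cast_nonneg (α := ℝ)]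
  unfold nsRatio
  push_cast
  rw [mul_div_assoc', div_eq_iff this.ne']
  ring

def HasDisjointBundles (W : ℕ → ℝ) (n : ℕ) (V : ℝ) : Prop :=
  ∃ Q : Fin n → Finset ℕ, Pairwise (Disjoint on Q) ∧ ∀ i, V ≤ ∑ x ∈ Q i, W x

lemma exists_owner {ι α : Type*} [Nonempty ι] {Q : ι → Finset α}
    (hQ : Pairwise (Disjoint on Q)) : ∃ g : α → ι, ∀ j x, x ∈ Q j → g x = j := by
  classical
  refine ⟨fun x => if h : ∃ j, x ∈ Q j then h.choose else Classical.arbitrary ι,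
    fun j x hx => ?_⟩
  have h : ∃ j, x ∈ Q j := ⟨j, hx⟩
  dsimp only
  rw [dif_pos h]
  by_contra hne
  exact disjoint_left.1 (hQ hne) h.choose_spec hx

def skipPair (N x : ℕ) : ℕ := if x < N then x else x + 2

lemma skipPair_injective (N : ℕ) : (skipPair N).Injective := by
  intro x y h
  simp only [skipPair] at h
  split_ifs at h <;> omega

lemma skipPair_monotone (N : ℕ) : Monotone (skipPair N) := by
  intro x y h
  simp only [skipPair]
  split_ifs <;> omega

lemma mem_range_skipPair {N y : ℕ} (h₁ : y ≠ N) (h₂ : y ≠ N + 1) :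
    y ∈ Set.range (skipPair N) :=
  ⟨if y < N then y else y - 2, by simp only [skipPair]; split_ifs <;> omega⟩

section Bundles

variable {W : ℕ → ℝ} {n N m : ℕ} {V : ℝ}

lemma hasDisjointBundles_comp {e : ℕ → ℕ} (he : e.Injective) {R : Fin n → Finset ℕ}
    (hR : Pairwise (Disjoint on R)) (hRe : ∀ j, ∀ x ∈ R j, x ∈ Set.range e)
    (hRV : ∀ j, V ≤ ∑ x ∈ R j, W x) : HasDisjointBundles (W ∘ e) n V :=
  ⟨fun j => (R j).preimage e he.injOn, fun _ _ hij => disjoint_preimage (hR hij),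
    fun j => (hRV j).trans_eq
      (sum_preimage e _ _ W fun x hx hxe => absurd (hRe j x hx) hxe).symm⟩

lemma HasDisjointBundles.card_mul_le (hW0 : ∀ i, 0 ≤ W i) (hWm : ∀ i, m ≤ i → W i = 0)
    (h : HasDisjointBundles W n V) : n * V ≤ ∑ x ∈ range m, W x := by
  obtain ⟨Q, hQ, hV⟩ := h
  calc (n : ℝ) * V = ∑ _j, V := by simp
    _ ≤ ∑ j, ∑ x ∈ Q j, W x := sum_le_sum fun j _ => hV j
    _ = ∑ x ∈ univ.biUnion Q, W x := (sum_biUnion fun i _ j _ hij => hQ hij).symm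
    _ = ∑ x ∈ univ.biUnion Q with x < m, W x :=
      (sum_filter_of_ne fun x _ hx => not_le.1 fun h => hx (hWm x h)).symm
    _ ≤ ∑ x ∈ range m, W x := sum_le_sum_of_subset_of_nonneg
      (fun x hx => mem_range.2 (mem_filter.1 hx).2) fun x _ _ => hW0 x

lemma HasDisjointBundles.comp_succ (h : HasDisjointBundles W (N + 1) V) :
    HasDisjointBundles (fun x => W (x + 1)) N V := by
  obtain ⟨Q, hQ, hV⟩ := h
  obtain ⟨g, hg⟩ := exists_owner hQ
  refine hasDisjointBundles_comp (e := (· + 1)) (add_left_injective 1)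
    (R := fun j => Q ((g 0).succAbove j)) (fun i j hij => hQ (Fin.succAbove_right_injective.ne hij))
    (fun j x hx => ?_) fun j => hV _
  rcases x with _ | x
  · exact absurd (hg _ 0 hx).symm (Fin.succAbove_ne _ _)
  · exact ⟨x, rfl⟩

lemma HasDisjointBundles.comp_skipPair (hW : Antitone W) (h : HasDisjointBundles W (N + 1) V) :
    HasDisjointBundles (fun x => W (skipPair N x)) N V := by
  classical
  obtain ⟨Q, hQ, hV⟩ := h
  obtain ⟨g, hg⟩ := exists_owner hQ
  obtain ⟨u, v, huv, hv, hguv⟩ : ∃ u v, u < v ∧ v ≤ N + 1 ∧ g u = g v := by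
    obtain ⟨x, hx, y, hy, hxy, hgxy⟩ := exists_ne_map_eq_of_card_lt_of_maps_to
      (s := range (N + 2)) (t := univ) (by simp) (f := g) fun _ _ => mem_coe.2 (mem_univ _)
    rw [mem_range] at hx hy
    rcases hxy.lt_or_gt with h | h
    · exact ⟨x, y, h, by omega, hgxy⟩
    · exact ⟨y, x, h, by omega, hgxy.symm⟩
  set R := fun j => Q ((g u).succAbove j)
  have hR : ∀ j, ∀ x ∈ R j, x ≠ u ∧ x ≠ v := by
    refine fun j x hx => ⟨?_, ?_⟩ <;> rintro rfl
    · exact Fin.succAbove_ne _ _ (hg _ _ hx).symm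
    · exact Fin.succAbove_ne _ _ (hguv.trans (hg _ _ hx)).symm
  -- Drop the bundle owning `u` and `v`; elsewhere, `N` and `N + 1` trade places with them.
  set σ : Equiv.Perm ℕ := Equiv.swap u N * Equiv.swap v (N + 1)
  have hσ : ∀ x, x ≠ u → x ≠ v → σ x ≤ x ∧ σ x ≠ N ∧ σ x ≠ N + 1 := by
    intro x hxu hxv
    simp only [σ, Equiv.Perm.mul_apply, Equiv.swap_apply_def]
    split_ifs <;> omega
  refine hasDisjointBundles_comp (skipPair_injective N) (R := fun j => (R j).image σ)
    (fun i j hij => (disjoint_image σ.injective).2 (hQ (Fin.succAbove_right_injective.ne hij)))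
    (fun j y hy => ?_) fun j => ?_
  · obtain ⟨x, hx, rfl⟩ := mem_image.1 hy
    obtain ⟨-, h₁, h₂⟩ := hσ x (hR j x hx).1 (hR j x hx).2
    exact mem_range_skipPair h₁ h₂
  · rw [sum_image σ.injective.injOn]
    exact (hV _).trans (sum_le_sum fun x hx => hW (hσ x (hR j x hx).1 (hR j x hx).2).1)

end Bundles

-- The nested partitions with `k = n`: item `n - 1 - i` receives the block `[t i, t (i + 1))`.
def NestedCover (W : ℕ → ℝ) (n m : ℕ) (c : ℝ) : Prop :=
  ∃ t : ℕ → ℕ, Monotone t ∧ t 0 = n ∧ t n = m ∧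
    ∀ i < n, c ≤ W (n - 1 - i) + ∑ x ∈ Ico (t i) (t (i + 1)), W x

section Reductions

variable {W : ℕ → ℝ} {N m : ℕ} {c : ℝ}

lemma NestedCover.mono {n : ℕ} {c' : ℝ} (h : NestedCover W n m c) (hc : c' ≤ c) :
    NestedCover W n m c' :=
  let ⟨t, ht, ht0, htn, hcut⟩ := h
  ⟨t, ht, ht0, htn, fun i hi => hc.trans (hcut i hi)⟩

lemma nestedCover_of_singletons (hNm : N + 1 ≤ m)
    (hlast : c ≤ W N + ∑ x ∈ Ico (N + 1) m, W x) (hsingle : ∀ j < N, c ≤ W j) :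
    NestedCover W (N + 1) m c := by
  refine ⟨fun k => if k = 0 then N + 1 else m, ?_, by simp, by simp, ?_⟩
  · intro k l hkl
    dsimp only
    split_ifs <;> omega
  · rintro (_ | i) hi
    · simpa using hlast
    · simpa using hsingle (N - (i + 1)) (by omega)

lemma NestedCover.of_comp_succ (h : NestedCover (fun x => W (x + 1)) N m c) (h0 : c ≤ W 0) :
    NestedCover W (N + 1) (m + 1) c := by
  obtain ⟨t, ht, ht0, htn, hcut⟩ := h
  have hle : ∀ k ≤ N, t k ≤ m := fun k hk => htn ▸ ht hk
  have hge : ∀ k ≥ N, m ≤ t k := fun k hk => htn ▸ ht hk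
  refine ⟨fun k => min (t k) m + 1,
    fun k l hkl => Nat.add_le_add_right (min_le_min_right m (ht hkl)) 1, ?_, ?_, ?_⟩
  · simp [← ht0, hle 0 (Nat.zero_le N)]
  · simp [hge (N + 1) N.le_succ]
  · intro i hi
    rcases (Nat.lt_succ_iff.1 hi).lt_or_eq with hi | rfl
    · simp only [min_eq_left (hle i hi.le), min_eq_left (hle (i + 1) hi)]
      rw [← sum_Ico_add', show N + 1 - 1 - i = N - 1 - i + 1 by omega]
      exact hcut i hi
    · simpa [hge i le_rfl, hge (i + 1) i.le_succ] using h0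

lemma NestedCover.of_comp_skipPair (h : NestedCover (fun x => W (skipPair N x)) N m c)
    (hpair : c ≤ W N + W (N + 1)) : NestedCover W (N + 1) (m + 2) c := by
  obtain ⟨t, ht, ht0, htn, hcut⟩ := h
  have hle : ∀ k ≤ N, t k ≤ m := fun k hk => htn ▸ ht hk
  have hge : ∀ k, N ≤ t k := fun k => ht0 ▸ ht (Nat.zero_le k)
  have ht0' : min (t 0) m = N := by simp [← ht0, hle 0 (Nat.zero_le N)]
  refine ⟨fun k => Nat.casesOn k (N + 1) fun k => min (t k) m + 2, ?_, rfl, ?_, ?_⟩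
  · refine monotone_nat_of_le_succ fun k => ?_
    cases k with
    | zero => simp [ht0']
    | succ k => exact Nat.add_le_add_right (min_le_min_right m (ht k.le_succ)) 2
  · simp [htn]
  · rintro (_ | i) hi
    · simpa [ht0'] using hpair
    · have hcut := hcut i (by omega)
      simp only [min_eq_left (hle i (by omega)), min_eq_left (hle (i + 1) (by omega))]
      rw [← sum_Ico_add', show N + 1 - 1 - (i + 1) = N - 1 - i by omega]
      convert hcut using 2
      · simp [skipPair, show N - 1 - i < N by omega]
      · refine sum_congr rfl fun x hx => ?_
        simp [skipPair, not_lt.2 ((hge i).trans (mem_Ico.1 hx).1)]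

end Reductions

section Greedy

variable {W : ℕ → ℝ} {m : ℕ} {c p : ℝ} {a : ℕ}

lemma greedyCut_exists (W : ℕ → ℝ) (m : ℕ) (c p : ℝ) (a : ℕ) :
    ∃ d, c ≤ p + ∑ x ∈ Ico a (a + d), W x ∨ m ≤ a + d :=
  ⟨m - a, Or.inr (by omega)⟩

-- The least `b ≥ a` at which `p` plus the items `[a, b)` reach `c`, but at most `m`.
noncomputable def greedyCut (W : ℕ → ℝ) (m : ℕ) (c p : ℝ) (a : ℕ) : ℕ :=
  a + Nat.find (greedyCut_exists W m c p a)

lemma le_greedyCut : a ≤ greedyCut W m c p a := Nat.le_add_right _ _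

lemma greedyCut_le (h : a ≤ m) : greedyCut W m c p a ≤ m := by
  have := Nat.find_min' (greedyCut_exists W m c p a) (m := m - a) (Or.inr (by omega))
  unfold greedyCut
  omega

lemma greedyCut_spec :
    c ≤ p + ∑ x ∈ Ico a (greedyCut W m c p a), W x ∨ m ≤ greedyCut W m c p a :=
  Nat.find_spec (greedyCut_exists W m c p a)

lemma greedyCut_sum_lt (hW : Antitone W) (hW0 : ∀ i, 0 ≤ W i) (hp : p < c) :
    p + ∑ x ∈ Ico a (greedyCut W m c p a), W x < c + W a := by
  unfold greedyCut
  rcases hd : Nat.find (greedyCut_exists W m c p a) with _ | d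
  · simp only [add_zero, Ico_self, sum_empty]
    linarith [hW0 a]
  · have hmin := Nat.find_min (greedyCut_exists W m c p a) (m := d) (by omega)
    simp only [not_or, not_le] at hmin
    rw [← add_assoc, sum_Ico_succ_top (Nat.le_add_right a d)]
    linarith [hmin.1, hW (Nat.le_add_right a d)]

noncomputable def greedyCuts (W : ℕ → ℝ) (m N : ℕ) (c : ℝ) : ℕ → ℕ
  | 0 => N + 1
  | i + 1 => greedyCut W m c (W (N - i)) (greedyCuts W m N c i)

lemma sum_range_eq_prefix_add_blocks {N k : ℕ} {T : ℕ → ℕ} (hT : Monotone T)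
    (hT0 : T 0 = N + 1) (hk : k ≤ N + 1) (hTk : T k ≤ m) :
    ∑ x ∈ range m, W x = ∑ x ∈ range (N + 1 - k), W x
      + ∑ i ∈ range k, (W (N - i) + ∑ x ∈ Ico (T i) (T (i + 1)), W x)
      + ∑ x ∈ Ico (T k) m, W x := by
  induction k with
  | zero => simp [hT0, sum_range_add_sum_Ico _ (hT0 ▸ hTk)]
  | succ k ih =>
    rw [ih (by omega) ((hT k.le_succ).trans hTk), ← sum_Ico_consecutive _ (hT k.le_succ) hTk,
      show N + 1 - k = N - k + 1 by omega, sum_range_succ _ (N - k), sum_range_succ,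
      show N + 1 - (k + 1) = N - k by omega]
    ring

theorem nestedCover_of_small_items {N : ℕ} (hW : Antitone W) (hW0 : ∀ i, 0 ≤ W i)
    (hNm : N + 1 ≤ m) (hfirst : W 0 < c) (hsmall : 2 * W (N + 1) ≤ c)
    (htotal : (3 * N + 2) * c ≤ 2 * ∑ x ∈ range m, W x) : NestedCover W (N + 1) m c := by
  set T := greedyCuts W m N c
  have hc : 0 < c := (hW0 0).trans_lt hfirst
  have hT0 : T 0 = N + 1 := rfl
  have hT_succ : ∀ i, T (i + 1) = greedyCut W m c (W (N - i)) (T i) := fun _ => rfl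
  have hT_mono : Monotone T := monotone_nat_of_le_succ fun i => (hT_succ i).symm ▸ le_greedyCut
  have hT_le : ∀ i, T i ≤ m := by
    intro i
    induction i with
    | zero => exact hNm
    | succ i ih => exact (hT_succ i) ▸ greedyCut_le ih
  set B : ℕ → ℝ := fun i => W (N - i) + ∑ x ∈ Ico (T i) (T (i + 1)), W x
  have hB_lt : ∀ i, B i < 3 / 2 * c := by
    intro i
    have h := greedyCut_sum_lt (m := m) (a := T i) hW hW0
      ((hW (Nat.zero_le (N - i))).trans_lt hfirst)
    have : W (T i) ≤ W (N + 1) := hW (hT0 ▸ hT_mono (Nat.zero_le i))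
    dsimp only [B]
    rw [hT_succ]
    linarith
  have hblocks : ∀ k, ∑ i ∈ range k, B i ≤ k * (3 / 2 * c) := fun k => by
    simpa using sum_le_card_nsmul (range k) B _ fun i _ => (hB_lt i).le
  have hprefix : ∀ k, ∑ x ∈ range k, W x ≤ k * c := fun k => by
    simpa using sum_le_card_nsmul (range k) W _ fun x _ => (hW (Nat.zero_le x)).trans hfirst.le
  have hdecomp := fun k (hk : k ≤ N + 1) =>
    sum_range_eq_prefix_add_blocks (W := W) hT_mono hT0 hk (hT_le k)
  have hB_ge : ∀ i < N, c ≤ B i := by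
    intro i hi
    by_contra! hlt
    have hTm : T (i + 1) = m := le_antisymm (hT_le _)
      ((hT_succ i ▸ greedyCut_spec).resolve_left hlt.not_ge)
    have hsum := hdecomp (i + 1) (by omega)
    rw [hTm, Ico_self, sum_empty, sum_range_succ, show N + 1 - (i + 1) = N - i by omega] at hsum
    have hNi := hprefix (N - i)
    rw [Nat.cast_sub hi.le] at hNi
    have := hblocks i
    have := mul_pos (sub_pos.2 (Nat.cast_lt (α := ℝ) |>.2 hi)) hc
    linarith
  have hlast : c ≤ W 0 + ∑ x ∈ Ico (T N) m, W x := by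
    have hsum := hdecomp N (by omega)
    rw [show N + 1 - N = 1 by omega, sum_range_one] at hsum
    have := hblocks N
    linarith
  refine ⟨fun k => if k ≤ N then T k else m, ?_, by simp [hT0], by simp, ?_⟩
  · intro k l hkl
    dsimp only
    split_ifs with hk hl
    · exact hT_mono hkl
    · exact hT_le k
    · omega
    · rfl
  · intro i hi
    rcases (Nat.lt_succ_iff.1 hi).lt_or_eq with hi | rfl
    · simpa [hi.le, show i + 1 ≤ N from hi, show N + 1 - 1 - i = N - i by omega]
        using hB_ge i hi
    · simpa using hlast

end Greedy

theorem nestedCover_of_hasDisjointBundles {n : ℕ} (hn : 0 < n) {W : ℕ → ℝ} {m : ℕ}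
    {V : ℝ} (hW : Antitone W) (hW0 : ∀ i, 0 ≤ W i) (hWm : ∀ i, m ≤ i → W i = 0) (hnm : n ≤ m)
    (h : HasDisjointBundles W n V) : NestedCover W n m (nsRatio n * V) := by
  induction n generalizing W m V with
  | zero => exact absurd hn (lt_irrefl 0)
  | succ N ih =>
    have htotal := h.card_mul_le hW0 hWm
    rcases Nat.eq_zero_or_pos N with rfl | hN
    · rw [nsRatio_one, one_mul]
      refine nestedCover_of_singletons hnm ?_ fun j hj => absurd hj (Nat.not_lt_zero j)
      rw [range_eq_Ico, sum_eq_sum_Ico_succ_bot hnm] at htotal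
      simpa using htotal
    set c := nsRatio (N + 1) * V
    by_cases hsingle : c ≤ W N
    · exact nestedCover_of_singletons hnm
        (le_add_of_le_of_nonneg hsingle (sum_nonneg fun x _ => hW0 x))
        fun j hj => hsingle.trans (hW hj.le)
    push Not at hsingle
    have hc : 0 < c := (hW0 N).trans_lt hsingle
    have hV : 0 < V := pos_of_mul_pos_right hc (nsRatio_pos N.succ_pos).le
    have hc_le : c ≤ nsRatio N * V := mul_le_mul_of_nonneg_right (nsRatio_succ_le hN) hV.le
    by_cases hfirst : c ≤ W 0
    · obtain ⟨m, rfl⟩ : ∃ m', m = m' + 1 := ⟨m - 1, by omega⟩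
      exact ((ih hN (hW.comp_monotone fun _ _ => Nat.succ_le_succ) (fun _ => hW0 _)
        (fun _ hx => hWm _ (by omega)) (by omega) h.comp_succ).mono hc_le).of_comp_succ hfirst
    push Not at hfirst
    by_cases hpair : c ≤ W N + W (N + 1)
    · have hNm : N + 2 ≤ m := by
        by_contra hm
        linarith [hWm (N + 1) (by omega)]
      obtain ⟨m, rfl⟩ : ∃ m', m = m' + 2 := ⟨m - 2, by omega⟩
      refine ((ih hN (hW.comp_monotone (skipPair_monotone N)) (fun _ => hW0 _)
        (fun x hx => hWm _ ?_) (by omega) (h.comp_skipPair hW)).mono hc_le).of_comp_skipPair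
        hpair
      simp only [skipPair]
      split_ifs <;> omega
    push Not at hpair
    refine nestedCover_of_small_items hW hW0 hnm hfirst (by linarith [hW N.le_succ]) ?_
    have := mul_nsRatio_succ N
    push_cast at htotal
    nlinarith

section ItemValue

variable {m : ℕ} {w : Fin m → ℝ}

def itemValue (w : Fin m → ℝ) (x : ℕ) : ℝ := if h : x < m then w ⟨x, h⟩ else 0

@[simp] lemma itemValue_val (i : Fin m) : itemValue w i = w i := dif_pos i.isLt

lemma itemValue_of_le {x : ℕ} (h : m ≤ x) : itemValue w x = 0 := dif_neg (not_lt.2 h)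

lemma itemValue_nonneg (hw : ∀ i, 0 ≤ w i) (x : ℕ) : 0 ≤ itemValue w x := by
  unfold itemValue
  split_ifs
  exacts [hw _, le_rfl]

lemma antitone_itemValue (hw : ∀ i, 0 ≤ w i)
    (hsorted : ∀ i j : Fin m, i ≤ j → w j ≤ w i) : Antitone (itemValue w) := by
  intro x y hxy
  unfold itemValue
  split_ifs with hy hx hx
  · exact hsorted _ _ hxy
  · omega
  · exact hw _
  · rfl

lemma sum_filter_val_mem_eq_sum_itemValue (s : Finset ℕ) :
    ∑ i ∈ univ.filter (fun i : Fin m => i.val ∈ s), w i = ∑ x ∈ s, itemValue w x := by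
  calc ∑ i ∈ univ.filter (fun i : Fin m => i.val ∈ s), w i
      = ∑ i : Fin m, if i.val ∈ s then itemValue w i else 0 := by simp [sum_filter]
    _ = ∑ x ∈ range m, if x ∈ s then itemValue w x else 0 :=
      Fin.sum_univ_eq_sum_range (fun x => if x ∈ s then itemValue w x else 0) m
    _ = ∑ x ∈ s, itemValue w x := by
      rw [← sum_filter]
      refine sum_subset (fun x hx => (mem_filter.1 hx).2) fun x hx hx' => itemValue_of_le ?_
      simpa [hx] using hx'

lemma hasDisjointBundles_itemValue {n : ℕ} {P : Fin n → Finset (Fin m)}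
    (hP : Pairwise (Disjoint on P)) {V : ℝ} (hV : ∀ j, V ≤ ∑ i ∈ P j, w i) :
    HasDisjointBundles (itemValue w) n V :=
  ⟨fun j => (P j).map Fin.valEmbedding, fun _ _ hij => (disjoint_map _).2 (hP hij),
    fun j => by simpa using hV j⟩

end ItemValue

lemma exists_eq_empty_of_card_lt {ι α : Type*} [Fintype ι] [Fintype α] {P : ι → Finset α}
    (hP : Pairwise (Disjoint on P)) (h : Fintype.card α < Fintype.card ι) : ∃ j, P j = ∅ := by
  by_contra! hne
  choose f hf using hne
  obtain ⟨i, j, hij, hfij⟩ := Fintype.exists_ne_map_eq_of_card_lt f h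
  exact disjoint_left.1 (hP hij) (hf i) (hfij ▸ hf j)

lemma Real.sSup_nonneg_of_nonempty_imp_zero_mem {s : Set ℝ} (h : s.Nonempty → 0 ∈ s) :
    0 ≤ sSup s := by
  rcases s.eq_empty_or_nonempty with hs | hs
  · simp [hs]
  · exact Real.sSup_nonneg' ⟨0, h hs, le_rfl⟩

section NestedShare

variable {n q m : ℕ} {w : Fin m → ℝ}

lemma NS_nonneg (hw : ∀ i, 0 ≤ w i) : 0 ≤ NS n q m w :=
  Real.sSup_nonneg_of_nonempty_imp_zero_mem
    fun ⟨_, k, z, t, hk, hkm, hz, hz0, hzn, hzq, ht, ht0, htn, _⟩ =>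
      ⟨k, z, t, hk, hkm, hz, hz0, hzn, hzq, ht, ht0, htn, fun _ => sum_nonneg fun i _ => hw i⟩

lemma le_NS_of_nestedCover {c : ℝ} (hn : 0 < n) (hq : 1 ≤ q) (hnm : n ≤ m)
    (hw : ∀ i, 0 ≤ w i) (h : NestedCover (itemValue w) n m c) : c ≤ NS n q m w := by
  obtain ⟨t, ht, ht0, htn, hcut⟩ := h
  unfold NS
  refine le_csSup ⟨∑ i, w i, ?_⟩ ⟨n, id, t, by omega, hnm, monotone_id, rfl, rfl,
    fun _ _ => rfl, ht, ht0, htn, fun j => ?_⟩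
  · rintro x ⟨_, _, _, _, _, _, _, _, _, _, _, _, hx⟩
    exact (hx ⟨0, hn⟩).trans
      (sum_le_sum_of_subset_of_nonneg (filter_subset _ _) fun i _ _ => hw i)
  · have hj := hcut (n - 1 - j) (by omega)
    rw [show n - 1 - (n - 1 - j) = j by omega, show n - 1 - j + 1 = n - j by omega] at hj
    have hjt : n ≤ t (n - 1 - j) := ht0.ge.trans (ht (Nat.zero_le _))
    calc c ≤ itemValue w j + ∑ x ∈ Ico (t (n - 1 - j)) (t (n - j)), itemValue w x := hj
      _ = ∑ x ∈ insert j.val (Ico (t (n - 1 - j)) (t (n - j))), itemValue w x :=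
        (sum_insert (by simp; omega)).symm
      _ = _ := by
        rw [← sum_filter_val_mem_eq_sum_itemValue]
        refine sum_congr (filter_congr fun i _ => ?_) fun _ _ => rfl
        simp only [mem_insert, mem_Ico, id]
        omega

end NestedShare

theorem ns_approximates_mms_general (n q m : ℕ) (hn : 2 ≤ n) (hq1 : 1 ≤ q)
    (w : Fin m → ℝ) (hw : ∀ i, 0 ≤ w i)
    (hsorted : ∀ i j : Fin m, i ≤ j → w j ≤ w i) :
    (2 * (n : ℝ)) / (3 * (n : ℝ) - 1) * MMSn n m w ≤ NS n q m w := by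
  have hn0 : 0 < n := by omega
  have hc : 0 < nsRatio n := nsRatio_pos hn0
  have hNS : 0 ≤ NS n q m w := NS_nonneg hw
  change nsRatio n * MMSn n m w ≤ _
  rw [← le_div_iff₀' hc]
  refine Real.sSup_le (fun V ⟨P, hP, _, hV⟩ => (le_div_iff₀' hc).2 ?_) (div_nonneg hNS hc.le)
  rcases le_or_gt n m with hnm | hmn
  · exact le_NS_of_nestedCover hn0 hq1 hnm hw <| nestedCover_of_hasDisjointBundles hn0
      (antitone_itemValue hw hsorted) (itemValue_nonneg hw) (fun _ => itemValue_of_le) hnm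
      (hasDisjointBundles_itemValue hP hV)
  · obtain ⟨j, hj⟩ := exists_eq_empty_of_card_lt hP (by simpa using hmn)
    have hV0 : V ≤ 0 := by simpa [hj] using hV j
    exact (mul_nonpos_of_nonneg_of_nonpos hc.le hV0).trans hNS

/-- For additive valuations over goods and every `n ≥ 2`, `1 ≤ q ≤ n`, the nested share
`NS_{n,q}` is at least a `2n/(3n−1)` fraction of the maximin share. -/
theorem ns_approximates_mms (n q m : ℕ) (hn : 2 ≤ n) (hq1 : 1 ≤ q) (hqn : q ≤ n)
    (w : Fin m → ℝ) (hw : ∀ i, 0 ≤ w i)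
    (hsorted : ∀ i j : Fin m, i ≤ j → w j ≤ w i) :
    (2 * (n : ℝ)) / (3 * (n : ℝ) - 1) * MMSn n m w ≤ NS n q m w :=
  ns_approximates_mms_general n q m hn hq1 w hw hsorted
end

section
/- For n = 4 agents and the additive valuation with item values (3, 3, 2, 2, 2, 2, 2, 2, 1, 1), the MMS equals 5 while for every 1 ≤ q ≤ 4 the nested share NS_{4,q} equals 4. In particular NS_{4,4} ≤ (4/5)·MMS for this instance. -/
/-!
The ten items are worth 20 in total, and `{3, 2}, {3, 2}, {2, 2, 1}, {2, 2, 1}` splits them evenly,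
so the maximin share is 5.

For a nested partition with cutpoints `z₁ ≤ z₂ ≤ z₃ ≤ k ≤ t₁ ≤ t₂ ≤ t₃`, the unions
`B₃`, `B₂ ∪ B₃`, `B₁ ∪ B₂ ∪ B₃` are the item intervals `[z₃, t₁)`, `[z₂, t₂)`, `[z₁, t₃)`.
If every bundle were worth more than 4, integrality and the total 20 would force every bundle to be
worth exactly 5, so these intervals would be worth 5, 10 and 15. The prefix sums are
`0, 3, 6, 8, 10, 12, 14, 16, 18, 19, 20`: the only interval worth 15 is `[1, 8)`, the only one
inside it worth 5 is `[1, 3)`, and then `[1, t₂)` would be worth 10, i.e. some prefix sum would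
be 13.
Conversely, taking the first four items as singleton prefix blocks gives bundles
`{0} ∪ {7, 8, 9}`, `{1} ∪ {6}`, `{2} ∪ {5}`, `{3} ∪ {4}` worth `7, 5, 4, 4`, whatever `q ≥ 1` is.
-/

open Finset

section PrefixSums

variable {M : Type*} {m : ℕ}

def prefixSum [AddCommMonoid M] (w : Fin m → M) (j : ℕ) : M :=
  ∑ i ∈ univ.filter (fun i : Fin m => i.val < j), w i

@[simp]
lemma prefixSum_zero [AddCommMonoid M] (w : Fin m → M) : prefixSum w 0 = 0 := by
  simp [prefixSum]

variable [AddCommGroup M] (w : Fin m → M)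

lemma sum_filter_Ico_eq_prefixSum_sub {a b : ℕ} (hab : a ≤ b) :
    ∑ i ∈ univ.filter (fun i : Fin m => a ≤ i.val ∧ i.val < b), w i
      = prefixSum w b - prefixSum w a := by
  rw [eq_sub_iff_add_eq, prefixSum, prefixSum,
    ← sum_union (disjoint_filter.2 fun i _ h h' => by omega), ← filter_or]
  congr 1
  ext i
  simp only [mem_filter, mem_univ, true_and]
  omega

lemma sum_filter_Ico_or_Ico_eq {a b c d : ℕ} (hab : a ≤ b) (hbc : b ≤ c) (hcd : c ≤ d) :
    ∑ i ∈ univ.filter (fun i : Fin m => (a ≤ i.val ∧ i.val < b) ∨ (c ≤ i.val ∧ i.val < d)), w i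
      = (prefixSum w b - prefixSum w a) + (prefixSum w d - prefixSum w c) := by
  rw [filter_or, sum_union (disjoint_filter.2 fun i _ h h' => by omega),
    sum_filter_Ico_eq_prefixSum_sub w hab, sum_filter_Ico_eq_prefixSum_sub w hcd]

end PrefixSums

def nestedBundle (n m : ℕ) (z t : ℕ → ℕ) (j : Fin n) : Finset (Fin m) :=
  univ.filter fun i : Fin m =>
    (z j.val ≤ i.val ∧ i.val < z (j.val + 1)) ∨ (t (n - 1 - j.val) ≤ i.val ∧ i.val < t (n - j.val))

lemma sum_nestedBundle {M : Type*} [AddCommGroup M] {n m : ℕ} (w : Fin m → M) {z t : ℕ → ℕ}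
    (hz : Monotone z) (ht : Monotone t) (hzt : z n = t 0) (j : Fin n) :
    ∑ i ∈ nestedBundle n m z t j, w i
      = (prefixSum w (z (j + 1)) - prefixSum w (z j))
        + (prefixSum w (t (n - j)) - prefixSum w (t (n - 1 - j))) :=
  sum_filter_Ico_or_Ico_eq w (hz j.val.le_succ)
    ((hz j.isLt).trans (hzt.trans_le (ht (Nat.zero_le _)))) (ht (by omega))

lemma MMSn_eq_of_balanced {n m : ℕ} {w : Fin m → ℝ} (hn : 0 < n) (P : Fin n → Finset (Fin m))
    (hdisj : ∀ i j, i ≠ j → Disjoint (P i) (P j)) (hcover : univ.biUnion P = univ)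
    (hP : ∀ j, (∑ i, w i) / n ≤ ∑ i ∈ P j, w i) :
    MMSn n m w = (∑ i, w i) / n := by
  refine IsGreatest.csSup_eq ⟨⟨P, hdisj, hcover, hP⟩, ?_⟩
  rintro x ⟨Q, hQdisj, hQcover, hx⟩
  rw [le_div_iff₀ (by exact_mod_cast hn), mul_comm]
  calc (n : ℝ) * x = ∑ _j : Fin n, x := by simp
    _ ≤ ∑ j, ∑ i ∈ Q j, w i := sum_le_sum fun j _ => hx j
    _ = ∑ i, w i := by
      rw [← sum_biUnion fun i _ j _ hij => hQdisj i j hij, hQcover]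

def exampleWeights : Fin 10 → ℤ := ![3, 3, 2, 2, 2, 2, 2, 2, 1, 1]

lemma exampleWeights_cast :
    (![3, 3, 2, 2, 2, 2, 2, 2, 1, 1] : Fin 10 → ℝ) = fun i => (exampleWeights i : ℝ) := by
  ext i
  fin_cases i <;> simp [exampleWeights]

lemma MMSn_exampleWeights : MMSn 4 10 (fun i => (exampleWeights i : ℝ)) = 5 := by
  let P : Fin 4 → Finset (Fin 10) := ![{0, 2}, {1, 3}, {4, 5, 8}, {6, 7, 9}]
  have htotal : ∑ i, (exampleWeights i : ℝ) = 20 := by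
    exact_mod_cast (by decide : ∑ i, exampleWeights i = 20)
  have hbalanced : ∀ j, (5 : ℤ) ≤ ∑ i ∈ P j, exampleWeights i := by decide
  calc MMSn 4 10 (fun i => (exampleWeights i : ℝ)) = (∑ i, (exampleWeights i : ℝ)) / 4 :=
        MMSn_eq_of_balanced (by norm_num) P (by decide) (by decide) fun j => by
          rw [htotal, show (20 : ℝ) / (4 : ℕ) = 5 by norm_num]
          exact_mod_cast hbalanced j
    _ = 5 := by rw [htotal]; norm_num

lemma exampleWeights_no_nested_fives {a b c d e f : ℕ} (hab : a ≤ b) (hbc : b ≤ c) (hcd : c ≤ d)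
    (hde : d ≤ e) (hef : e ≤ f) (hf : f ≤ 10)
    (h15 : prefixSum exampleWeights f = prefixSum exampleWeights a + 15)
    (h10 : prefixSum exampleWeights e = prefixSum exampleWeights b + 10)
    (h5 : prefixSum exampleWeights d = prefixSum exampleWeights c + 5) : False := by
  obtain ⟨rfl, rfl⟩ : a = 1 ∧ f = 8 :=
    (by decide : ∀ f ≤ 10, ∀ a ≤ f, prefixSum exampleWeights f = prefixSum exampleWeights a + 15 →
      a = 1 ∧ f = 8) f hf a (by omega) h15
  obtain ⟨rfl, rfl⟩ : c = 1 ∧ d = 3 :=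
    (by decide : ∀ d ≤ 8, ∀ c ≤ d, 1 ≤ c →
      prefixSum exampleWeights d = prefixSum exampleWeights c + 5 → c = 1 ∧ d = 3)
      d (by omega) c hcd (by omega) h5
  obtain rfl : b = 1 := by omega
  exact (by decide : ∀ e ≤ 10, prefixSum exampleWeights e ≠ 13) e (by omega) h10

lemma exampleWeights_nested_le_four {z t : ℕ → ℕ} (hz : Monotone z) (hz0 : z 0 = 0)
    (hzt : z 4 = t 0) (ht : Monotone t) (ht4 : t 4 = 10) {x : ℝ}
    (hx : ∀ j, x ≤ ∑ i ∈ nestedBundle 4 10 z t j, (exampleWeights i : ℝ)) : x ≤ 4 := by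
  by_contra! hx4
  have hbundle : ∀ j < 4, (4 : ℤ) <
      (prefixSum exampleWeights (z (j + 1)) - prefixSum exampleWeights (z j))
        + (prefixSum exampleWeights (t (4 - j)) - prefixSum exampleWeights (t (4 - 1 - j))) := by
    intro j hj
    rw [← sum_nestedBundle exampleWeights hz ht hzt ⟨j, hj⟩]
    exact_mod_cast hx4.trans_le (hx ⟨j, hj⟩)
  have h0 := hbundle 0 (by norm_num)
  have h1 := hbundle 1 (by norm_num)
  have h2 := hbundle 2 (by norm_num)
  have h3 := hbundle 3 (by norm_num)
  simp only [Nat.reduceAdd, Nat.reduceSub, hz0, ht4, hzt, prefixSum_zero] at h0 h1 h2 h3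
  have h20 : prefixSum exampleWeights 10 = 20 := by decide
  -- four integers above 4 with sum 20 are all equal to 5
  exact exampleWeights_no_nested_fives (hz one_le_two) (hz (by norm_num : 2 ≤ 3))
    ((hz (by norm_num : 3 ≤ 4)).trans (hzt.trans_le (ht (Nat.zero_le 1)))) (ht one_le_two)
    (ht (by norm_num : 2 ≤ 3)) (ht4 ▸ ht (by norm_num : 3 ≤ 4)) (by omega) (by omega) (by omega)

lemma NS_exampleWeights {q : ℕ} (hq : 1 ≤ q) : NS 4 q 10 (fun i => (exampleWeights i : ℝ)) = 4 := by
  have hwitness : ∀ j, (4 : ℤ) ≤ ∑ i ∈ nestedBundle 4 10 (fun j => min j 4)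
      (fun j => if j ≤ 3 then j + 4 else 10) j, exampleWeights i := by
    decide
  refine IsGreatest.csSup_eq ⟨⟨4, fun j => min j 4, fun j => if j ≤ 3 then j + 4 else 10,
    by omega, by norm_num, fun i j hij => min_le_min_right 4 hij, rfl, rfl,
    fun j _ => min_eq_left (by omega), monotone_nat_of_le_succ fun j => by split_ifs <;> omega,
    rfl, rfl, fun j => by beta_reduce; exact_mod_cast hwitness j⟩, ?_⟩
  rintro x ⟨k, z, t, -, -, hz, hz0, hzk, -, ht, htk, ht4, hx⟩
  exact exampleWeights_nested_le_four hz hz0 (hzk.trans htk.symm) ht ht4 hx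

/-- For `n = 4` agents and the additive valuation with item values
`(3, 3, 2, 2, 2, 2, 2, 2, 1, 1)`, the maximin share equals `5` while the nested share
`NS_{4,q}` equals `4` for every `1 ≤ q ≤ 4`; in particular `NS_{4,4} ≤ (4/5)·MMS`. -/
theorem ns_example_four_agents :
    MMSn 4 10 (![3, 3, 2, 2, 2, 2, 2, 2, 1, 1] : Fin 10 → ℝ) = 5 ∧
    (∀ q : ℕ, 1 ≤ q → q ≤ 4 →
      NS 4 q 10 (![3, 3, 2, 2, 2, 2, 2, 2, 1, 1] : Fin 10 → ℝ) = 4) ∧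
    NS 4 4 10 (![3, 3, 2, 2, 2, 2, 2, 2, 1, 1] : Fin 10 → ℝ)
      ≤ (4 / 5 : ℝ) * MMSn 4 10 (![3, 3, 2, 2, 2, 2, 2, 2, 1, 1] : Fin 10 → ℝ) := by
  simp only [exampleWeights_cast]
  refine ⟨MMSn_exampleWeights, fun q hq _ => NS_exampleWeights hq, ?_⟩
  rw [MMSn_exampleWeights, NS_exampleWeights (by norm_num)]
  norm_num
end

section
/- For every fixed q ≥ 1 and ε > 0, there exist n ≥ 2q and an additive valuation v such that NS_{n,q}(v) ≤ (2/3 + ε)·MMS_n(v). Concretely, with k = ⌈1/(2ε)⌉, n = (4^{k+1}−1)/3, and items consisting for each a ∈ {0,...,k} of 4^a 'large' items of value 1 − a/(2k) and 2·4^a 'small' items of value a/(2k) each, the nested share NS_{n,1}(v) equals 1 while MMS_n(v) ≥ 3/2 − ε. -/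
open Finset

namespace NestedShare

section General

def block (m lo hi : ℕ) : Finset (Fin m) :=
  univ.filter fun i => lo ≤ (i : ℕ) ∧ (i : ℕ) < hi

lemma mem_block {m lo hi : ℕ} {i : Fin m} :
    i ∈ block m lo hi ↔ lo ≤ (i : ℕ) ∧ (i : ℕ) < hi := by
  simp [block]

lemma card_block_le (m lo hi : ℕ) : #(block m lo hi) ≤ hi - lo := by
  calc #(block m lo hi) = #((block m lo hi).map Fin.valEmbedding) := (card_map _).symm
    _ ≤ #(Ico lo hi) := card_le_card fun a ha => by
        obtain ⟨i, hi, rfl⟩ := mem_map.1 ha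
        simpa [mem_block] using hi
    _ = hi - lo := Nat.card_Ico lo hi

lemma block_succ {m j : ℕ} (hj : j < m) : block m j (j + 1) = {⟨j, hj⟩} := by
  ext i
  simp [mem_block, Fin.ext_iff]
  omega

def nestedBundle (n m : ℕ) (z t : ℕ → ℕ) (j : ℕ) : Finset (Fin m) :=
  block m (z j) (z (j + 1)) ∪ block m (t (n - 1 - j)) (t (n - j))

structure IsNestedCut (n q m k : ℕ) (z t : ℕ → ℕ) : Prop where
  sub_lt : n - q < k
  le_card : k ≤ m
  monotone_z : Monotone z
  z_zero : z 0 = 0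
  z_last : z n = k
  z_singleton : ∀ j, j ≤ n - q → z j = j
  monotone_t : Monotone t
  t_zero : t 0 = k
  t_last : t n = m

theorem NS_eq_of {n q m : ℕ} {w : Fin m → ℝ} {x : ℝ}
    (hmem : ∃ k z t, IsNestedCut n q m k z t ∧
      ∀ j : Fin n, x ≤ ∑ i ∈ nestedBundle n m z t j, w i)
    (hle : ∀ k z t, IsNestedCut n q m k z t →
      ∃ j : Fin n, ∑ i ∈ nestedBundle n m z t j, w i ≤ x) :
    NS n q m w = x := by
  have hbundle (z t : ℕ → ℕ) (j : Fin n) : nestedBundle n m z t j =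
      univ.filter fun i : Fin m => (z j ≤ (i : ℕ) ∧ (i : ℕ) < z (j + 1)) ∨
        (t (n - 1 - j) ≤ (i : ℕ) ∧ (i : ℕ) < t (n - j)) :=
    (filter_or _ _ _).symm
  refine IsGreatest.csSup_eq ⟨?_, ?_⟩
  · obtain ⟨k, z, t, ⟨h₁, h₂, h₃, h₄, h₅, h₆, h₇, h₈, h₉⟩, hx⟩ := hmem
    exact ⟨k, z, t, h₁, h₂, h₃, h₄, h₅, h₆, h₇, h₈, h₉, fun j => hbundle z t j ▸ hx j⟩
  · rintro y ⟨k, z, t, h₁, h₂, h₃, h₄, h₅, h₆, h₇, h₈, h₉, hy⟩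
    obtain ⟨j, hj⟩ := hle k z t ⟨h₁, h₂, h₃, h₄, h₅, h₆, h₇, h₈, h₉⟩
    exact (hy j).trans (hbundle z t j ▸ hj)

theorem le_MMSn_of_fibers {n m : ℕ} (hn : 0 < n) {w : Fin m → ℝ} {x : ℝ}
    (f : Fin m → Fin n)
    (h : ∀ j, x ≤ ∑ i ∈ univ.filter (f · = j), w i) : x ≤ MMSn n m w := by
  refine le_csSup ⟨∑ i, |w i|, ?_⟩ ⟨fun j => univ.filter (f · = j), ?_, ?_, h⟩
  · rintro y ⟨P, -, -, hP⟩
    calc y ≤ ∑ i ∈ P ⟨0, hn⟩, w i := hP _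
      _ ≤ ∑ i ∈ P ⟨0, hn⟩, |w i| := sum_le_sum fun i _ => le_abs_self _
      _ ≤ ∑ i, |w i| := sum_le_sum_of_subset_of_nonneg (subset_univ _) fun i _ _ => abs_nonneg _
  · intro i j hij
    exact disjoint_filter.2 fun a _ hi hj => hij (hi ▸ hj)
  · ext i
    simp

lemma add_add_le_sum {ι M : Type*} [AddCommMonoid M] [PartialOrder M] [IsOrderedAddMonoid M]
    {s : Finset ι} {f : ι → M} (hf : ∀ i ∈ s, 0 ≤ f i) {a b c : ι}
    (ha : a ∈ s) (hb : b ∈ s) (hc : c ∈ s) (hab : a ≠ b) (hac : a ≠ c) (hbc : b ≠ c) :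
    f a + f b + f c ≤ ∑ i ∈ s, f i := by
  classical
  calc f a + f b + f c = ∑ i ∈ {a, b, c}, f i := by
        rw [sum_insert (by simp [hab, hac]), sum_insert (by simp [hbc]), sum_singleton, add_assoc]
    _ ≤ ∑ i ∈ s, f i := sum_le_sum_of_subset_of_nonneg
        (by simp [insert_subset_iff, ha, hb, hc]) fun i hi _ => hf i hi

/-- If bundles `n - 1, …, j + 1` have three items each, the suffix block of bundle `j` starts at
`3 (n - 1 - j) + z (j + 1)` or later. -/
lemma three_mul_add_le_of_three_le {n : ℕ} {z t : ℕ → ℕ} (hz : Monotone z) (ht : Monotone t)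
    (hzt : z n = t 0)
    (h : ∀ j, 1 ≤ j → j < n → 3 * (n - 1 - j) + z (j + 1) ≤ t (n - 1 - j) →
      3 ≤ (z (j + 1) - z j) + (t (n - j) - t (n - 1 - j))) :
    ∀ j < n, 3 * (n - 1 - j) + z (j + 1) ≤ t (n - 1 - j) := by
  suffices hd : ∀ d < n, 3 * d + z (n - d) ≤ t d by
    intro j hj
    have := hd (n - 1 - j) (by omega)
    rwa [show n - (n - 1 - j) = j + 1 by omega] at this
  intro d
  induction d with
  | zero => simp [hzt]
  | succ d ih =>
    intro hd
    have key := h (n - 1 - d) (by omega) (by omega)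
    simp only [show n - 1 - (n - 1 - d) = d by omega, show n - 1 - d + 1 = n - d by omega,
      show n - (n - 1 - d) = d + 1 by omega] at key
    have := key (ih (by omega))
    have := hz (show n - (d + 1) ≤ n - d by omega)
    have := ht (show d ≤ d + 1 by omega)
    rw [show n - 1 - d = n - (d + 1) by omega] at *
    omega

end General

section Valuation

/-- Large item `i` lies in group `a` iff `4 ^ a ≤ 3 i + 1 < 4 ^ (a + 1)`; so group `a` consists
of `4 ^ a` consecutive items. -/
def level (i : ℕ) : ℕ := Nat.log 4 (3 * i + 1)

lemma level_mono : Monotone level := fun _ _ h => Nat.log_mono_right (by omega)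

lemma level_eq {a i : ℕ} (h₁ : 4 ^ a ≤ 3 * i + 1) (h₂ : 3 * i + 1 < 4 ^ (a + 1)) :
    level i = a :=
  Nat.log_eq_of_pow_le_of_lt_pow h₁ h₂

lemma level_zero : level 0 = 0 := level_eq (by norm_num) (by norm_num)

lemma level_le {a i : ℕ} (h : 3 * i + 1 < 4 ^ (a + 1)) : level i ≤ a :=
  Nat.lt_succ_iff.1 ((Nat.log_lt_iff_lt_pow (by norm_num) (by omega)).2 h)

lemma le_level {a i : ℕ} (h : 4 ^ a ≤ 3 * i + 1) : a ≤ level i :=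
  (Nat.le_log_iff_pow_le (by norm_num) (by omega)).2 h

lemma pow_four_mod_three (a : ℕ) : 4 ^ a % 3 = 1 := by
  simp [Nat.pow_mod]

lemma level_two_mul_add {r e : ℕ} (he : e = 1 ∨ e = 2) :
    level (2 * r + e) = level (r / 2) + 1 := by
  set c := level (r / 2)
  have h₁ : 4 ^ c ≤ 3 * (r / 2) + 1 := Nat.pow_log_le_self 4 (by omega)
  have h₂ : 3 * (r / 2) + 1 < 4 ^ (c + 1) := Nat.lt_pow_succ_log_self (by norm_num) _
  have h₃ := pow_four_mod_three (c + 1)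
  have h₄ : 4 ^ (c + 1) = 4 * 4 ^ c := by ring
  have h₅ : 4 ^ (c + 1 + 1) = 4 * 4 ^ (c + 1) := by ring
  apply level_eq <;> omega

/-- The first large item of the top group `K + 1`. -/
def topStart (K : ℕ) : ℕ := (4 ^ (K + 1) - 1) / 3

def numAgents (K : ℕ) : ℕ := 4 * topStart K + 1

lemma three_mul_topStart_add_one (K : ℕ) : 3 * topStart K + 1 = 4 ^ (K + 1) := by
  have := pow_four_mod_three (K + 1)
  have := Nat.one_le_pow (K + 1) 4 (by norm_num)
  unfold topStart
  omega

lemma three_mul_numAgents_add_one (K : ℕ) : 3 * numAgents K + 1 = 4 ^ (K + 2) := by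
  have := three_mul_topStart_add_one K
  rw [pow_succ]
  unfold numAgents
  omega

lemma succ_le_topStart (K : ℕ) : K + 1 ≤ topStart K := by
  suffices 3 * (K + 1) + 1 ≤ 4 ^ (K + 1) by have := three_mul_topStart_add_one K; omega
  induction K with
  | zero => norm_num
  | succ K ih => rw [pow_succ]; omega

lemma level_le_of_lt_numAgents {K i : ℕ} (h : i < numAgents K) : level i ≤ K + 1 :=
  level_le (by rw [show K + 1 + 1 = K + 2 from rfl, ← three_mul_numAgents_add_one]; omega)

lemma succ_le_level_of_topStart_le {K i : ℕ} (h : topStart K ≤ i) : K + 1 ≤ level i :=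
  le_level (by have := three_mul_topStart_add_one K; omega)

/-- Items `i < n` are the large ones. Item `i ≥ n` is the small item `r = 3 n - 1 - i` counted
from the least valuable end; the small items `2 s, 2 s + 1` lie in the group of large item `s`. -/
noncomputable def value (K i : ℕ) : ℝ :=
  if i < numAgents K then 1 - level i / (2 * (K + 1))
  else level ((3 * numAgents K - 1 - i) / 2) / (2 * (K + 1))

variable {K i : ℕ}

lemma value_of_lt (h : i < numAgents K) : value K i = 1 - level i / (2 * (K + 1)) :=
  if_pos h

lemma value_of_le (h : numAgents K ≤ i) :
    value K i = level ((3 * numAgents K - 1 - i) / 2) / (2 * (K + 1)) :=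
  if_neg (by omega)

lemma div_le_half {a : ℕ} (h : a ≤ K + 1) : (a : ℝ) / (2 * (K + 1)) ≤ 1 / 2 := by
  rw [div_le_iff₀ (by positivity)]
  have : (a : ℝ) ≤ K + 1 := by exact_mod_cast h
  linarith

lemma half_le_div {a : ℕ} (h : K + 1 ≤ a) : 1 / 2 ≤ (a : ℝ) / (2 * (K + 1)) := by
  rw [le_div_iff₀ (by positivity)]
  have : (K : ℝ) + 1 ≤ a := by exact_mod_cast h
  linarith

lemma level_small_le (h : numAgents K ≤ i) : level ((3 * numAgents K - 1 - i) / 2) ≤ K + 1 :=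
  level_le_of_lt_numAgents (by have : 0 < numAgents K := Nat.succ_pos _; omega)

lemma value_nonneg (K i : ℕ) : 0 ≤ value K i := by
  unfold value
  split_ifs with h
  · linarith [div_le_half (level_le_of_lt_numAgents h)]
  · positivity

lemma value_le_half (h : topStart K ≤ i) : value K i ≤ 1 / 2 := by
  rcases lt_or_ge i (numAgents K) with hi | hi
  · rw [value_of_lt hi]
    linarith [half_le_div (succ_le_level_of_topStart_le h)]
  · rw [value_of_le hi]
    exact div_le_half (level_small_le hi)

lemma value_eq_half (h₁ : numAgents K ≤ i)
    (h₂ : topStart K ≤ (3 * numAgents K - 1 - i) / 2) :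
    value K i = 1 / 2 :=
  (value_le_half (by unfold numAgents at h₁; omega)).antisymm
    (value_of_le h₁ ▸ half_le_div (succ_le_level_of_topStart_le h₂))

lemma value_antitone (K : ℕ) : Antitone (value K) := by
  intro i j hij
  rcases lt_or_ge j (numAgents K) with hj | hj
  · rw [value_of_lt hj, value_of_lt (hij.trans_lt hj)]
    have : (level i : ℝ) ≤ level j := by exact_mod_cast level_mono hij
    gcongr
  rcases lt_or_ge i (numAgents K) with hi | hi
  · rw [value_of_lt hi]
    linarith [div_le_half (level_le_of_lt_numAgents hi), value_le_half (K := K) (i := j)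
      (by unfold numAgents at hj; omega)]
  · rw [value_of_le hi, value_of_le hj]
    gcongr
    exact level_mono (by omega)

lemma value_le_of_le {j : ℕ} (hj : j < numAgents K) (h : 3 * numAgents K - 2 * j - 2 ≤ i) :
    value K i ≤ level j / (2 * (K + 1)) := by
  rw [value_of_le (by omega)]
  gcongr
  exact level_mono (by omega)

lemma value_small_pair {j e : ℕ} (hj : j < numAgents K) (he : e = 1 ∨ e = 2) :
    value K (3 * numAgents K - 2 * j - e) = level j / (2 * (K + 1)) := by
  rw [value_of_le (by omega), show (3 * numAgents K - 1 - (3 * numAgents K - 2 * j - e)) / 2 = j by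
    omega]

end Valuation

section NestedShareValue

variable {K q k j : ℕ} {z t : ℕ → ℕ}

lemma level_one : level 1 = 1 := level_eq (by norm_num) (by norm_num)

lemma three_le_of_topStart_le (hc : IsNestedCut (numAgents K) q (3 * numAgents K) k z t)
    (hq : topStart K ≤ numAgents K - q) (hj : topStart K ≤ j)
    (hbig : 1 < ∑ i ∈ nestedBundle (numAgents K) (3 * numAgents K) z t j, value K i) :
    3 ≤ (z (j + 1) - z j) + (t (numAgents K - j) - t (numAgents K - 1 - j)) := by
  set B := nestedBundle (numAgents K) (3 * numAgents K) z t j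
  have hhalf : ∀ i ∈ B, value K i ≤ 1 / 2 := by
    intro i hi
    apply value_le_half
    rcases mem_union.1 hi with h | h <;> rw [mem_block] at h
    · have := hc.monotone_z hj
      rw [hc.z_singleton _ hq] at this
      omega
    · have := hc.monotone_t (Nat.zero_le (numAgents K - 1 - j))
      have := hc.sub_lt
      rw [hc.t_zero] at *
      omega
  have hcard : #B ≤ (z (j + 1) - z j) + (t (numAgents K - j) - t (numAgents K - 1 - j)) :=
    (card_union_le _ _).trans (add_le_add (card_block_le ..) (card_block_le ..))
  by_contra! hlt
  have hsum : ∑ i ∈ B, value K i ≤ #B • (1 / 2 : ℝ) := sum_le_card_nsmul _ _ _ hhalf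
  have : (#B : ℝ) ≤ 2 := by exact_mod_cast (by omega : #B ≤ 2)
  rw [nsmul_eq_mul] at hsum
  linarith

lemma sum_nestedBundle_le_of_lt_topStart (hc : IsNestedCut (numAgents K) q (3 * numAgents K) k z t)
    (hq : topStart K ≤ numAgents K - q) (hj : j < topStart K)
    (hstart : 3 * numAgents K - 2 * j - 2 ≤ t (numAgents K - 1 - j)) :
    ∑ i ∈ nestedBundle (numAgents K) (3 * numAgents K) z t j, value K i ≤
      1 - level j / (2 * (K + 1)) +
        (t (numAgents K - j) - t (numAgents K - 1 - j) : ℕ) * (level j / (2 * (K + 1))) := by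
  have hjn : j < numAgents K := by unfold numAgents; omega
  set L : ℝ := level j / (2 * (K + 1))
  set S := block (3 * numAgents K) (t (numAgents K - 1 - j)) (t (numAgents K - j))
  have hbundle :
      nestedBundle (numAgents K) (3 * numAgents K) z t j = {⟨j, by omega⟩} ∪ S := by
    rw [nestedBundle, hc.z_singleton j (by omega), hc.z_singleton (j + 1) (by omega), block_succ]
  have hdisj : Disjoint {(⟨j, by omega⟩ : Fin (3 * numAgents K))} S :=
    disjoint_singleton_left.2 fun h => by rw [mem_block] at h; simp only at h; omega
  have hS : ∑ i ∈ S, value K i ≤ #S • L :=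
    sum_le_card_nsmul _ _ _ fun i hi => value_le_of_le hjn (hstart.trans (mem_block.1 hi).1)
  have hcard : (#S : ℝ) ≤ (t (numAgents K - j) - t (numAgents K - 1 - j) : ℕ) := by
    exact_mod_cast card_block_le ..
  rw [hbundle, sum_union hdisj, sum_singleton, value_of_lt hjn, nsmul_eq_mul] at *
  have : 0 ≤ L := by positivity
  nlinarith

lemma three_le_of_lt_topStart (hc : IsNestedCut (numAgents K) q (3 * numAgents K) k z t)
    (hq : topStart K ≤ numAgents K - q) (hj₁ : 1 ≤ j) (hj : j < topStart K)
    (hstart : 3 * numAgents K - 2 * j - 2 ≤ t (numAgents K - 1 - j))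
    (hbig : 1 < ∑ i ∈ nestedBundle (numAgents K) (3 * numAgents K) z t j, value K i) :
    3 ≤ (z (j + 1) - z j) + (t (numAgents K - j) - t (numAgents K - 1 - j)) := by
  have hL : (0 : ℝ) < level j / (2 * (K + 1)) :=
    div_pos (Nat.cast_pos.2 (level_one.symm.trans_le (level_mono hj₁))) (by positivity)
  have hlen : 2 ≤ t (numAgents K - j) - t (numAgents K - 1 - j) := by
    by_contra! h
    have : ((t (numAgents K - j) - t (numAgents K - 1 - j) : ℕ) : ℝ) ≤ 1 := by
      exact_mod_cast (by omega : t (numAgents K - j) - t (numAgents K - 1 - j) ≤ 1)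
    nlinarith [sum_nestedBundle_le_of_lt_topStart hc hq hj hstart]
  rw [hc.z_singleton j (by omega), hc.z_singleton (j + 1) (by omega)]
  omega

/-- Counting down from the last bundle, a bundle worth more than `1` has three items, which pushes
the suffix block of bundle `0` onto the two worthless small items of group `0`. -/
lemma exists_sum_nestedBundle_le_one (hq : topStart K ≤ numAgents K - q)
    (hc : IsNestedCut (numAgents K) q (3 * numAgents K) k z t) :
    ∃ j : Fin (numAgents K),
      ∑ i ∈ nestedBundle (numAgents K) (3 * numAgents K) z t j, value K i ≤ 1 := by
  have hb := succ_le_topStart K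
  have hn : topStart K < numAgents K := by unfold numAgents; omega
  by_contra! hbig
  have hstart := three_mul_add_le_of_three_le hc.monotone_z hc.monotone_t
    (hc.z_last.trans hc.t_zero.symm) (fun j hj₁ hjn hI => ?_) 0 (by omega)
  · rw [hc.z_singleton 1 (by omega)] at hstart
    have := sum_nestedBundle_le_of_lt_topStart hc hq (j := 0) (by omega) (by omega)
    simp only [level_zero, CharP.cast_eq_zero, zero_div, sub_zero, mul_zero, add_zero] at this
    exact (hbig ⟨0, by omega⟩).not_ge this
  · rcases lt_or_ge j (topStart K) with hjb | hjb
    · rw [hc.z_singleton (j + 1) (by omega)] at hI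
      exact three_le_of_lt_topStart hc hq hj₁ hjb (by omega) (hbig ⟨j, hjn⟩)
    · exact three_le_of_topStart_le hc hq hjb (hbig ⟨j, hjn⟩)

lemma isNestedCut_staircase (hq : 1 ≤ q) :
    IsNestedCut (numAgents K) q (3 * numAgents K) (numAgents K) id (numAgents K + 2 * ·) where
  sub_lt := by unfold numAgents; omega
  le_card := by omega
  monotone_z := monotone_id
  z_zero := rfl
  z_last := rfl
  z_singleton _ _ := rfl
  monotone_t _ _ h := Nat.add_le_add_left (Nat.mul_le_mul_left 2 h) _
  t_zero := rfl
  t_last := by omega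

/-- Agent `j` gets large item `j` and the two small items of its group `level j`. -/
lemma one_le_sum_staircase (j : Fin (numAgents K)) :
    1 ≤ ∑ i ∈ nestedBundle (numAgents K) (3 * numAgents K) id (numAgents K + 2 * ·) j,
      value K i := by
  have hj := j.isLt
  have hmem : ∀ a (ha : a < 3 * numAgents K),
      (a = j ∨ 3 * numAgents K - 2 * j - 2 ≤ a ∧ a < 3 * numAgents K - 2 * j) →
      (⟨a, ha⟩ : Fin _) ∈ nestedBundle (numAgents K) (3 * numAgents K) id
        (numAgents K + 2 * ·) j := by
    intro a ha h
    simp only [nestedBundle, mem_union, mem_block, id]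
    omega
  have hval : (1 : ℝ) ≤ value K j + value K (3 * numAgents K - 2 * j - 2) +
      value K (3 * numAgents K - 2 * j - 1) := by
    rw [value_of_lt hj, value_small_pair hj (Or.inr rfl), value_small_pair hj (Or.inl rfl)]
    have : (0 : ℝ) ≤ level j / (2 * (K + 1)) := by positivity
    linarith
  exact hval.trans <| add_add_le_sum (f := fun i : Fin (3 * numAgents K) => value K i)
    (fun i _ => value_nonneg K i)
    (hmem j (by omega) (Or.inl rfl))
    (hmem (3 * numAgents K - 2 * j - 2) (by omega) (Or.inr ⟨le_rfl, by omega⟩))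
    (hmem (3 * numAgents K - 2 * j - 1) (by omega) (Or.inr ⟨by omega, by omega⟩))
    (Fin.ne_of_val_ne (by simp only; omega)) (Fin.ne_of_val_ne (by simp only; omega))
    (Fin.ne_of_val_ne (by simp only; omega))

theorem NS_value_eq_one (hq₁ : 1 ≤ q) (hq : topStart K ≤ numAgents K - q) :
    NS (numAgents K) q (3 * numAgents K) (fun i => value K i) = 1 :=
  NS_eq_of ⟨_, _, _, isNestedCut_staircase hq₁, one_le_sum_staircase⟩
    fun _ _ _ hc => exists_sum_nestedBundle_le_one hq hc

end NestedShareValue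

section MaximinShareValue

variable {K : ℕ}

lemma le_value_pair_add {j : ℕ} (hj₁ : 1 ≤ j) (hj : j ≤ 2 * topStart K) :
    3 / 2 - 1 / (2 * (K + 1)) ≤
      value K (2 * j - 1) + value K (2 * j) + value K (3 * numAgents K - j) := by
  obtain ⟨r, rfl⟩ : ∃ r, j = r + 1 := ⟨j - 1, by omega⟩
  have hn : 2 * r + 2 < numAgents K := by unfold numAgents; omega
  set a := level (r / 2)
  have h₁ : value K (2 * (r + 1) - 1) = 1 - (a + 1 : ℕ) / (2 * (K + 1)) := by
    rw [show 2 * (r + 1) - 1 = 2 * r + 1 by omega, value_of_lt (by omega),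
      level_two_mul_add (Or.inl rfl)]
  have h₂ : value K (2 * (r + 1)) = 1 - (a + 1 : ℕ) / (2 * (K + 1)) := by
    rw [show 2 * (r + 1) = 2 * r + 2 by omega, value_of_lt hn, level_two_mul_add (Or.inr rfl)]
  have h₃ : value K (3 * numAgents K - (r + 1)) = a / (2 * (K + 1)) := by
    rw [value_of_le (by omega),
      show (3 * numAgents K - 1 - (3 * numAgents K - (r + 1))) / 2 = r / 2 by omega]
  have ha : (a : ℝ) ≤ K := by
    have := level_le_of_lt_numAgents (K := K) (i := 2 * r + 1) (by omega)
    rw [level_two_mul_add (Or.inl rfl)] at this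
    exact_mod_cast (by omega : a ≤ K)
  rw [h₁, h₂, h₃]
  push_cast
  field_simp
  linarith

/-- Bundle `0` gets large item `0` and small items `n, n + 1` of the top group; bundle
`j ∈ [1, 2 b]` gets large items `2 j - 1, 2 j` and small item `3 n - j`, one group lower; the
remaining small items, all of the top group, are put together three by three. -/
def mmsBundle (K i : ℕ) : ℕ :=
  if i < numAgents K then (i + 1) / 2
  else if i < numAgents K + 2 then 0
  else if i < 3 * numAgents K - 2 * topStart K then
    2 * topStart K + 1 + (3 * numAgents K - 1 - 2 * topStart K - i) / 3
  else 3 * numAgents K - i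

lemma mmsBundle_lt {i : ℕ} (hi : i < 3 * numAgents K) : mmsBundle K i < numAgents K := by
  have := succ_le_topStart K
  unfold mmsBundle numAgents at *
  split_ifs <;> omega

def mmsAssignment (K : ℕ) (i : Fin (3 * numAgents K)) : Fin (numAgents K) :=
  ⟨mmsBundle K i, mmsBundle_lt i.isLt⟩

lemma le_sum_mmsAssignment (j : Fin (numAgents K)) :
    3 / 2 - 1 / (2 * (K + 1)) ≤ ∑ i ∈ univ.filter (mmsAssignment K · = j), value K i := by
  have hb := succ_le_topStart K
  have hn : numAgents K = 4 * topStart K + 1 := rfl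
  have hj := j.isLt
  have key : ∀ a b c (ha : a < 3 * numAgents K) (hb : b < 3 * numAgents K)
      (hc : c < 3 * numAgents K), a ≠ b → a ≠ c → b ≠ c →
      mmsBundle K a = j → mmsBundle K b = j → mmsBundle K c = j →
      3 / 2 - 1 / (2 * (K + 1)) ≤ value K a + value K b + value K c →
      3 / 2 - 1 / (2 * (K + 1)) ≤ ∑ i ∈ univ.filter (mmsAssignment K · = j), value K i := by
    intro a b c ha hb hc hab hac hbc hma hmb hmc hval
    refine hval.trans <| add_add_le_sum (f := fun i : Fin (3 * numAgents K) => value K i)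
      (a := ⟨a, ha⟩) (b := ⟨b, hb⟩) (c := ⟨c, hc⟩) (fun i _ => value_nonneg K i)
      ?_ ?_ ?_
      (Fin.ne_of_val_ne hab) (Fin.ne_of_val_ne hac) (Fin.ne_of_val_ne hbc) <;>
    simp [mmsAssignment, Fin.ext_iff, *]
  have hδ : (0 : ℝ) ≤ 1 / (2 * (K + 1)) := by positivity
  rcases Nat.eq_zero_or_pos (j : ℕ) with hj₀ | hj₁
  · refine key 0 (numAgents K) (numAgents K + 1) (by omega) (by omega) (by omega) (by omega)
      (by omega) (by omega) ?_ ?_ ?_ ?_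
    all_goals try (unfold mmsBundle; split_ifs <;> omega)
    rw [value_of_lt (by omega), level_zero, value_eq_half le_rfl (by omega),
      value_eq_half (by omega) (by omega)]
    simp only [Nat.cast_zero, zero_div, sub_zero]
    linarith
  rcases le_or_gt (j : ℕ) (2 * topStart K) with hjp | hjt
  · refine key (2 * j - 1) (2 * j) (3 * numAgents K - j) (by omega) (by omega) (by omega)
      (by omega) (by omega) (by omega) ?_ ?_ ?_ (le_value_pair_add hj₁ hjp)
    all_goals unfold mmsBundle; split_ifs <;> omega
  · set u := (j : ℕ) - 2 * topStart K - 1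
    refine key (3 * numAgents K - 1 - 2 * topStart K - 3 * u)
      (3 * numAgents K - 2 - 2 * topStart K - 3 * u) (3 * numAgents K - 3 - 2 * topStart K - 3 * u)
      (by omega) (by omega) (by omega) (by omega) (by omega) (by omega) ?_ ?_ ?_ ?_
    all_goals try (unfold mmsBundle; split_ifs <;> omega)
    rw [value_eq_half (by omega) (by omega), value_eq_half (by omega) (by omega),
      value_eq_half (by omega) (by omega)]
    linarith

theorem le_MMSn_value (K : ℕ) :
    3 / 2 - 1 / (2 * (K + 1)) ≤ MMSn (numAgents K) (3 * numAgents K) (fun i => value K i) :=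
  le_MMSn_of_fibers (Nat.succ_pos _) (mmsAssignment K) le_sum_mmsAssignment

end MaximinShareValue

end NestedShare

/-- For every fixed `q ≥ 1` and `ε > 0`, there exist `n ≥ 2q` and an additive valuation
(given by item values `w` sorted in non-increasing order) for which the nested share
`NS_{n,q}` equals `1` while the maximin share is at least `3/2 − ε`; in particular
`NS_{n,q} ≤ (2/3 + ε)·MMS_n`. -/
theorem ns_asymptotically_two_thirds (q : ℕ) (hq : 1 ≤ q) (ε : ℝ) (hε : 0 < ε) :
    ∃ (n m : ℕ) (w : Fin m → ℝ),
      2 * q ≤ n ∧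
      (∀ i, 0 ≤ w i) ∧
      (∀ i j : Fin m, i ≤ j → w j ≤ w i) ∧
      NS n q m w = 1 ∧
      (3 / 2 : ℝ) - ε ≤ MMSn n m w ∧
      NS n q m w ≤ ((2 / 3 : ℝ) + ε) * MMSn n m w := by
  set K := q + ⌈(2 * ε)⁻¹⌉₊
  have hδ : 1 / (2 * (K + 1 : ℝ)) ≤ ε := by
    have hK : (2 * ε)⁻¹ ≤ K + 1 := by
      have : (⌈(2 * ε)⁻¹⌉₊ : ℝ) ≤ K := by exact_mod_cast Nat.le_add_left _ _
      linarith [Nat.le_ceil (2 * ε)⁻¹]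
    rw [inv_le_iff_one_le_mul₀ (by positivity)] at hK
    rw [div_le_iff₀ (by positivity)]
    linarith
  have hδ' : 1 / (2 * (K + 1 : ℝ)) ≤ 1 / 2 := by
    gcongr
    linarith [(Nat.cast_nonneg K : (0 : ℝ) ≤ K)]
  have hb := NestedShare.succ_le_topStart K
  have hn : NestedShare.numAgents K = 4 * NestedShare.topStart K + 1 := rfl
  have hNS := NestedShare.NS_value_eq_one (K := K) hq (by omega)
  have hMMS := NestedShare.le_MMSn_value K
  refine ⟨_, _, _, by omega, fun i => NestedShare.value_nonneg K i,
    fun i j h => NestedShare.value_antitone K h, hNS, by linarith, ?_⟩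
  rw [hNS]
  nlinarith [mul_le_mul_of_nonneg_left hMMS (by positivity : (0 : ℝ) ≤ 2 / 3 + ε),
    mul_le_mul_of_nonneg_left hδ' hε.le]
end
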